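/- arXiv:1605.00781 — 11 statements merged into one kernel-verified Lean document; each statement's English description precedes it below -/
import Mathlib

section
/- Let G and H be groups, let g = (g_1, …, g_n) and h = (h_1, …, h_n) be ordered generating tuples of G and H respectively, and let c : G → {1, …, m} and d : H → {1, …, m} be colorings with Con(g, c) = Con(h, d). Let S_1, S_2 ⊆ {1, …, m} and set A_k = c^{-1}(S_k) ⊆ G and B_k = d^{-1}(S_k) ⊆ H for k = 1, 2. Then for each index i ∈ {1, …, n}: (1) if g_i · A_1 ⊆ A_2 then h_i · B_1 ⊆ B_2; and (2) if g_i · A_1 = A_2 then h_i · B_1 = B_2. -/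
open Pointwise

/-- `g` is an ordered generating tuple of `G`. -/
def Generates {G : Type*} [Group G] {n : ℕ} (g : Fin n → G) : Prop :=
  Subgroup.closure (Set.range g) = ⊤

/-- The configuration set of the configuration pair `(g, c)`: a configuration is a tuple
`(c₀, c₁, …, c_n)` of colors realized by some `x ∈ G`, i.e. `c x = c₀` and
`c (gᵢ * x) = cᵢ` for all `i`. -/
def Config {G : Type*} [Group G] {n m : ℕ} (g : Fin n → G) (c : G → Fin m) :
    Set (Fin m × (Fin n → Fin m)) :=
  { p | ∃ x : G, c x = p.1 ∧ ∀ i, c (g i * x) = p.2 i }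

theorem stmt0 {G H : Type*} [Group G] [Group H] {n m : ℕ}
    (g : Fin n → G) (h : Fin n → H) (c : G → Fin m) (d : H → Fin m)
    (hg : Generates g) (hh : Generates h)
    (hcon : Config g c = Config h d)
    (S₁ S₂ : Set (Fin m)) (i : Fin n) :
    ((g i • (c ⁻¹' S₁) ⊆ c ⁻¹' S₂) → (h i • (d ⁻¹' S₁) ⊆ d ⁻¹' S₂)) ∧
    ((g i • (c ⁻¹' S₁) = c ⁻¹' S₂) → (h i • (d ⁻¹' S₁) = d ⁻¹' S₂)) := by
  have key : ∀ y : H, ∃ x : G, c x = d y ∧ ∀ j, c (g j * x) = d (h j * y) := by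
    intro y
    have hm : (⟨d y, fun j => d (h j * y)⟩ : Fin m × (Fin n → Fin m)) ∈ Config g c := by
      rw [hcon]; exact ⟨y, rfl, fun j => rfl⟩
    exact hm
  have part1 : (g i • (c ⁻¹' S₁) ⊆ c ⁻¹' S₂) → (h i • (d ⁻¹' S₁) ⊆ d ⁻¹' S₂) := by
    intro hsub y hy
    obtain ⟨z, hz, hzy⟩ := hy
    obtain ⟨x, hx1, hx2⟩ := key z
    have hx : x ∈ c ⁻¹' S₁ := by
      simp only [Set.mem_preimage, hx1]; exact hz
    have : g i * x ∈ c ⁻¹' S₂ := hsub ⟨x, hx, rfl⟩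
    have hd : d (h i * z) ∈ S₂ := by rw [← hx2 i]; exact this
    simpa [← hzy] using hd
  refine ⟨part1, fun heq => ?_⟩
  apply Set.Subset.antisymm (part1 heq.subset)
  intro y hy
  obtain ⟨x, hx1, hx2⟩ := key ((h i)⁻¹ * y)
  have hgx : g i * x ∈ c ⁻¹' S₂ := by
    have := hx2 i
    simp only [Set.mem_preimage, this, mul_inv_cancel_left]
    exact hy
  rw [← heq] at hgx
  obtain ⟨x', hx', hxx⟩ := hgx
  have hxe : x' = x := by
    have : g i * x' = g i * x := hxx
    exact mul_left_cancel this
  subst hxe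
  refine ⟨(h i)⁻¹ * y, ?_, by simp [smul_eq_mul]⟩
  simp only [Set.mem_preimage, ← hx1]
  exact hx'
end

section
/- Let G and H be finitely generated groups that are configuration equivalent. Then G admits a paradoxical decomposition if and only if H does, and in that case the Tarski numbers are equal: τ(G) = τ(H). -/
open Pointwise

/-- Configuration equivalence of groups: every configuration set of one group is a
configuration set of the other (with tuples of the same length and colorings into the same
color set), and vice versa. -/
def ConfigEquiv (G H : Type*) [Group G] [Group H] : Prop :=
  (∀ (n m : ℕ) (g : Fin n → G) (c : G → Fin m), Generates g →
    ∃ (h : Fin n → H) (d : H → Fin m), Generates h ∧ Config g c = Config h d) ∧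
  (∀ (n m : ℕ) (h : Fin n → H) (d : H → Fin m), Generates h →
    ∃ (g : Fin n → G) (c : G → Fin m), Generates g ∧ Config h d = Config g c)

/-- A paradoxical decomposition of `G` with `m + n` pieces. -/
def ParadoxicalWitness (G : Type*) [Group G] (m n : ℕ) : Prop :=
  0 < m ∧ 0 < n ∧
  ∃ (P : Fin m → Set G) (Q : Fin n → Set G) (x : Fin m → G) (y : Fin n → G),
    (Pairwise fun i j => Disjoint (P i) (P j)) ∧
    (Pairwise fun i j => Disjoint (Q i) (Q j)) ∧
    (∀ i j, Disjoint (P i) (Q j)) ∧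
    (⋃ i, x i • P i) = Set.univ ∧ (⋃ j, y j • Q j) = Set.univ

/-- `G` admits a paradoxical decomposition. -/
def IsParadoxical (G : Type*) [Group G] : Prop :=
  ∃ m n : ℕ, ParadoxicalWitness G m n

/-- The Tarski number of `G`: the minimal value of `m + n` over all paradoxical
decompositions of `G`. -/
noncomputable def tarskiNumber (G : Type*) [Group G] : ℕ :=
  sInf { k | ∃ m n : ℕ, m + n = k ∧ ParadoxicalWitness G m n }

lemma transfer {G H : Type*} [Group G] [Group H] [Group.FG G]
    (hc : ∀ (n m : ℕ) (g : Fin n → G) (c : G → Fin m), Generates g →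
      ∃ (h : Fin n → H) (d : H → Fin m), Generates h ∧ Config g c = Config h d)
    {m n : ℕ} (hw : ParadoxicalWitness G m n) : ParadoxicalWitness H m n := by
  classical
  obtain ⟨hm, hn, P, Q, x, y, hP, hQ, hPQ, hxc, hyc⟩ := hw
  obtain ⟨S, hSclos, hSfin⟩ := Group.fg_iff.mp (inferInstance : Group.FG G)
  set T : Finset G := hSfin.toFinset with hT
  set k := T.card with hk
  set s : Fin k → G := fun i => (T.equivFin.symm i : G) with hs
  set g : Fin ((m + n) + k) → G :=
    Fin.append (Fin.append (fun i => (x i)⁻¹) (fun j => (y j)⁻¹)) s with hg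
  set c : G → Fin ((m + n) + 1) := fun z =>
    if h1 : ∃ i, z ∈ P i then Fin.castSucc (Fin.castAdd n h1.choose)
    else if h2 : ∃ j, z ∈ Q j then Fin.castSucc (Fin.natAdd m h2.choose)
    else Fin.last (m + n) with hc'
  -- color characterizations
  have hcP : ∀ (z : G) (i : Fin m), c z = Fin.castSucc (Fin.castAdd n i) ↔ z ∈ P i := by
    intro z i
    constructor
    · intro hz
      rw [hc'] at hz
      simp only at hz
      split_ifs at hz with h1 h2
      · have : h1.choose = i := by
          have := congrArg Fin.val hz
          simp at this
          exact Fin.ext this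
        exact this ▸ h1.choose_spec
      · have := congrArg Fin.val hz
        simp at this
        omega
      · have := congrArg Fin.val hz
        simp at this
        omega
    · intro hz
      have h1 : ∃ i, z ∈ P i := ⟨i, hz⟩
      have hch : h1.choose = i := by
        by_contra hne
        exact Set.disjoint_left.mp (hP hne) h1.choose_spec hz
      rw [hc']
      simp only [dif_pos h1, hch]
  have hcQ : ∀ (z : G) (j : Fin n), c z = Fin.castSucc (Fin.natAdd m j) ↔ z ∈ Q j := by
    intro z j
    constructor
    · intro hz
      rw [hc'] at hz
      simp only at hz
      split_ifs at hz with h1 h2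
      · have := congrArg Fin.val hz
        simp at this
        omega
      · have : h2.choose = j := by
          have := congrArg Fin.val hz
          simp at this
          exact Fin.ext this
        exact this ▸ h2.choose_spec
      · have := congrArg Fin.val hz
        simp at this
        omega
    · intro hz
      have h1 : ¬ ∃ i, z ∈ P i := by
        rintro ⟨i, hi⟩
        exact Set.disjoint_left.mp (hPQ i j) hi hz
      have h2 : ∃ j, z ∈ Q j := ⟨j, hz⟩
      have hch : h2.choose = j := by
        by_contra hne
        exact Set.disjoint_left.mp (hQ hne) h2.choose_spec hz
      rw [hc']
      simp only [dif_neg h1, dif_pos h2, hch]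
  -- g evaluated at special indices
  have hgP : ∀ i : Fin m, g (Fin.castAdd k (Fin.castAdd n i)) = (x i)⁻¹ := by
    intro i; rw [hg, Fin.append_left, Fin.append_left]
  have hgQ : ∀ j : Fin n, g (Fin.castAdd k (Fin.natAdd m j)) = (y j)⁻¹ := by
    intro j; rw [hg, Fin.append_left, Fin.append_right]
  -- g generates
  have hgen : Generates g := by
    have hsub : S ⊆ Set.range g := by
      intro a ha
      have haT : a ∈ T := by rw [hT]; exact hSfin.mem_toFinset.mpr ha
      refine ⟨Fin.natAdd (m + n) (T.equivFin ⟨a, haT⟩), ?_⟩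
      rw [hg, Fin.append_right, hs]
      simp
    refine le_antisymm le_top ?_
    rw [← hSclos]
    exact Subgroup.closure_mono hsub
  -- key property of the configuration set
  have hprop : ∀ p ∈ Config g c,
      (∃ i : Fin m, p.2 (Fin.castAdd k (Fin.castAdd n i)) = Fin.castSucc (Fin.castAdd n i)) ∧
      (∃ j : Fin n, p.2 (Fin.castAdd k (Fin.natAdd m j)) = Fin.castSucc (Fin.natAdd m j)) := by
    rintro ⟨c0, cs⟩ ⟨z, hz0, hzs⟩
    constructor
    · have : z ∈ ⋃ i, x i • P i := hxc ▸ Set.mem_univ z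
      obtain ⟨i, hi⟩ := Set.mem_iUnion.mp this
      refine ⟨i, ?_⟩
      have hmem : (x i)⁻¹ * z ∈ P i := by
        rw [← smul_eq_mul]
        exact Set.mem_smul_set_iff_inv_smul_mem.mp hi
      have := hzs (Fin.castAdd k (Fin.castAdd n i))
      rw [hgP i] at this
      exact this.symm.trans ((hcP _ i).mpr hmem)
    · have : z ∈ ⋃ j, y j • Q j := hyc ▸ Set.mem_univ z
      obtain ⟨j, hj⟩ := Set.mem_iUnion.mp this
      refine ⟨j, ?_⟩
      have hmem : (y j)⁻¹ * z ∈ Q j := by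
        rw [← smul_eq_mul]
        exact Set.mem_smul_set_iff_inv_smul_mem.mp hj
      have := hzs (Fin.castAdd k (Fin.natAdd m j))
      rw [hgQ j] at this
      exact this.symm.trans ((hcQ _ j).mpr hmem)
  -- transfer
  obtain ⟨h, d, hhgen, hconf⟩ := hc _ _ g c hgen
  refine ⟨hm, hn,
    (fun i => d ⁻¹' {Fin.castSucc (Fin.castAdd n i)}),
    (fun j => d ⁻¹' {Fin.castSucc (Fin.natAdd m j)}),
    (fun i => (h (Fin.castAdd k (Fin.castAdd n i)))⁻¹),
    (fun j => (h (Fin.castAdd k (Fin.natAdd m j)))⁻¹),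
    ?_, ?_, ?_, ?_, ?_⟩
  · intro i j hij
    rw [Set.disjoint_left]
    intro w hwi hwj
    apply hij
    have : Fin.castSucc (Fin.castAdd n i) = Fin.castSucc (Fin.castAdd n j) := by
      rw [← Set.mem_singleton_iff.mp hwi, ← Set.mem_singleton_iff.mp hwj]
    have := congrArg Fin.val this
    simp at this
    exact Fin.ext this
  · intro i j hij
    rw [Set.disjoint_left]
    intro w hwi hwj
    apply hij
    have : Fin.castSucc (Fin.natAdd m i) = Fin.castSucc (Fin.natAdd m j) := by
      rw [← Set.mem_singleton_iff.mp hwi, ← Set.mem_singleton_iff.mp hwj]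
    have := congrArg Fin.val this
    simp at this
    exact Fin.ext this
  · intro i j
    rw [Set.disjoint_left]
    intro w hwi hwj
    have : Fin.castSucc (Fin.castAdd n i) = Fin.castSucc (Fin.natAdd m j) := by
      rw [← Set.mem_singleton_iff.mp hwi, ← Set.mem_singleton_iff.mp hwj]
    have := congrArg Fin.val this
    simp at this
    omega
  · rw [Set.eq_univ_iff_forall]
    intro w
    have hpmem : ((d w, fun t => d (h t * w)) :
        Fin ((m + n) + 1) × (Fin ((m + n) + k) → Fin ((m + n) + 1))) ∈ Config h d :=
      ⟨w, rfl, fun _ => rfl⟩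
    rw [← hconf] at hpmem
    obtain ⟨⟨i, hi⟩, -⟩ := hprop _ hpmem
    refine Set.mem_iUnion.mpr ⟨i, ?_⟩
    rw [Set.mem_smul_set_iff_inv_smul_mem]
    simpa [smul_eq_mul] using hi
  · rw [Set.eq_univ_iff_forall]
    intro w
    have hpmem : ((d w, fun t => d (h t * w)) :
        Fin ((m + n) + 1) × (Fin ((m + n) + k) → Fin ((m + n) + 1))) ∈ Config h d :=
      ⟨w, rfl, fun _ => rfl⟩
    rw [← hconf] at hpmem
    obtain ⟨-, ⟨j, hj⟩⟩ := hprop _ hpmem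
    refine Set.mem_iUnion.mpr ⟨j, ?_⟩
    rw [Set.mem_smul_set_iff_inv_smul_mem]
    simpa [smul_eq_mul] using hj

theorem stmt2 (G H : Type*) [Group G] [Group H] [Group.FG G] [Group.FG H]
    (hGH : ConfigEquiv G H) :
    (IsParadoxical G ↔ IsParadoxical H) ∧
    (IsParadoxical G → tarskiNumber G = tarskiNumber H) := by
  have t1 : ∀ {m n : ℕ}, ParadoxicalWitness G m n → ParadoxicalWitness H m n :=
    fun hw => transfer hGH.1 hw
  have t2 : ∀ {m n : ℕ}, ParadoxicalWitness H m n → ParadoxicalWitness G m n :=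
    fun hw => transfer hGH.2 hw
  constructor
  · exact ⟨fun ⟨m, n, w⟩ => ⟨m, n, t1 w⟩, fun ⟨m, n, w⟩ => ⟨m, n, t2 w⟩⟩
  · intro _
    unfold tarskiNumber
    congr 1
    ext kk
    exact ⟨fun ⟨m, n, he, w⟩ => ⟨m, n, he, t1 w⟩, fun ⟨m, n, he, w⟩ => ⟨m, n, he, t2 w⟩⟩
end

section
/- Let G and H be finitely generated groups that are configuration equivalent, and let n be a positive integer. If G admits a G = nG decomposition, then H admits an H = nH decomposition, and τ_n(G) = τ_n(H). -/
open Pointwise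

/-- A `G = nG` decomposition with piece counts `k i`: pairwise disjoint subsets
`P i j` (`i : Fin n`, `j : Fin (k i)`) and elements `x i j` of `G` such that
`G = ⋃ⱼ x i j • P i j` for every `i`. -/
def NDecompWitness (G : Type*) [Group G] (n : ℕ) (k : Fin n → ℕ) : Prop :=
  ∃ (P : ∀ i : Fin n, Fin (k i) → Set G) (x : ∀ i : Fin n, Fin (k i) → G),
    (Pairwise fun (p q : Σ i : Fin n, Fin (k i)) => Disjoint (P p.1 p.2) (P q.1 q.2)) ∧
    ∀ i : Fin n, (⋃ j, x i j • P i j) = Set.univ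

/-- `G` admits a `G = nG` decomposition. -/
def HasNDecomp (G : Type*) [Group G] (n : ℕ) : Prop :=
  ∃ k : Fin n → ℕ, NDecompWitness G n k

/-- `τₙ(G)`: the minimal value of `∑ i, k i` over all `G = nG` decompositions. -/
noncomputable def tauN (G : Type*) [Group G] (n : ℕ) : ℕ :=
  sInf { s | ∃ k : Fin n → ℕ, (∑ i, k i) = s ∧ NDecompWitness G n k }

lemma transfer_decomp {G H : Type*} [Group G] [Group H] [Group.FG G]
    (hdir : ∀ (N M : ℕ) (g : Fin N → G) (c : G → Fin M), Generates g →
      ∃ (h : Fin N → H) (d : H → Fin M), Generates h ∧ Config g c = Config h d)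
    {n : ℕ} {k : Fin n → ℕ} (hw : NDecompWitness G n k) : NDecompWitness H n k := by
  classical
  obtain ⟨P, x, hdisj, hcov⟩ := hw
  obtain ⟨S, hScl, hSfin⟩ := Group.fg_iff.mp ‹Group.FG G›
  haveI := hSfin.fintype
  set ι := Σ i : Fin n, Fin (k i) with hι
  set J := (↥S ⊕ ι) with hJ
  set eJ : J ≃ Fin (Fintype.card J) := Fintype.equivFin J with heJ
  set eC : Option ι ≃ Fin (Fintype.card (Option ι)) := Fintype.equivFin _ with heC
  set cc : G → Option ι :=
    fun z => if h : ∃ p : ι, z ∈ P p.1 p.2 then some h.choose else none with hccdef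
  have key1 : ∀ (z : G) (p : ι), z ∈ P p.1 p.2 → cc z = some p := by
    intro z p hz
    have hex : ∃ q : ι, z ∈ P q.1 q.2 := ⟨p, hz⟩
    have hspec := hex.choose_spec
    have heq : hex.choose = p := by
      by_contra hne
      exact Set.disjoint_left.mp (hdisj hne) hspec hz
    simp only [hccdef, dif_pos hex, heq]
  set g : Fin (Fintype.card J) → G :=
    fun t => Sum.elim (fun s : ↥S => (s : G)) (fun p : ι => (x p.1 p.2)⁻¹) (eJ.symm t)
    with hgdef
  set c : G → Fin (Fintype.card (Option ι)) := fun z => eC (cc z) with hcdef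
  have hGen : Generates g := by
    rw [Generates, eq_top_iff, ← hScl]
    apply Subgroup.closure_mono
    intro s hs
    exact ⟨eJ (Sum.inl ⟨s, hs⟩), by simp [hgdef]⟩
  obtain ⟨h, d, hGenH, hEq⟩ := hdir _ _ g c hGen
  refine ⟨fun i j => { z | d z = eC (some ⟨i, j⟩) },
    fun i j => (h (eJ (Sum.inr ⟨i, j⟩)))⁻¹, ?_, ?_⟩
  · intro p q hne
    rw [Set.disjoint_left]
    intro z hzp hzq
    apply hne
    have : (some p : Option ι) = some q := eC.injective (hzp.symm.trans hzq)
    exact Option.some_injective _ this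
  · intro i
    ext y
    simp only [Set.mem_iUnion, Set.mem_univ, iff_true]
    have hmem : (d y, fun t => d (h t * y)) ∈ Config h d := ⟨y, rfl, fun _ => rfl⟩
    rw [← hEq] at hmem
    obtain ⟨x0, hx0c, hx0⟩ := hmem
    have hx0cov : x0 ∈ (⋃ j, x i j • P i j) := (hcov i).symm ▸ Set.mem_univ x0
    obtain ⟨j, hj⟩ := Set.mem_iUnion.mp hx0cov
    refine ⟨j, ?_⟩
    rw [Set.mem_smul_set_iff_inv_smul_mem, inv_inv]
    have hP : (x i j)⁻¹ * x0 ∈ P i j := by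
      have := Set.mem_smul_set_iff_inv_smul_mem.mp hj
      simpa using this
    have hcval : c (g (eJ (Sum.inr ⟨i, j⟩)) * x0) = eC (some ⟨i, j⟩) := by
      simp only [hgdef, Equiv.symm_apply_apply, Sum.elim_inr, hcdef]
      rw [key1 _ ⟨i, j⟩ hP]
    have := (hx0 (eJ (Sum.inr ⟨i, j⟩))).symm.trans hcval
    simpa using this

theorem stmt3 (G H : Type*) [Group G] [Group H] [Group.FG G] [Group.FG H]
    (hGH : ConfigEquiv G H) (n : ℕ) (hn : 0 < n) (hG : HasNDecomp G n) :
    HasNDecomp H n ∧ tauN G n = tauN H n := by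
  obtain ⟨hd1, hd2⟩ := hGH
  have hsubGH : { s | ∃ k : Fin n → ℕ, (∑ i, k i) = s ∧ NDecompWitness G n k } ⊆
      { s | ∃ k : Fin n → ℕ, (∑ i, k i) = s ∧ NDecompWitness H n k } := by
    rintro s ⟨k, hk, hw⟩
    exact ⟨k, hk, transfer_decomp hd1 hw⟩
  have hsubHG : { s | ∃ k : Fin n → ℕ, (∑ i, k i) = s ∧ NDecompWitness H n k } ⊆
      { s | ∃ k : Fin n → ℕ, (∑ i, k i) = s ∧ NDecompWitness G n k } := by
    rintro s ⟨k, hk, hw⟩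
    exact ⟨k, hk, transfer_decomp hd2 hw⟩
  constructor
  · obtain ⟨k, hw⟩ := hG
    exact ⟨k, transfer_decomp hd1 hw⟩
  · rw [tauN, tauN, Set.Subset.antisymm hsubGH hsubHG]
end

section
/- Let G and H be finitely generated groups that are configuration equivalent, and let n ≥ 2. If G contains a subgroup isomorphic to the free group of rank n, then H contains a subgroup isomorphic to the free group of rank n. -/
/-!
Call a colouring `c : G → Option (letters)` ping-pong for `a₁, …, aₙ` if `aᵢ x` has colour `aᵢ`
exactly when `x` does not have colour `aᵢ⁻¹`. If `a₁, …, aₙ` freely generate `F ≤ G`, write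
`x = u(x) · r(x)` with `r(x)` a fixed representative of the coset `F x` and colour `x` by the
first letter of the reduced word `u(x)`; since `u(aᵢ x) = aᵢ u(x)` this is ping-pong, and some
`x` is uncoloured. Being ping-pong is a condition on the configurations of `c` relative to any
generating tuple extending `(a₁, …, aₙ)`, so a configuration equivalence carries it over to a
colouring of `H` for some `b₁, …, bₙ`, again with an uncoloured point `y₀`. By induction on
reduced words, the colour of `w(b) · y₀` is the first letter of `w`, so `w(b) ≠ 1` for `w ≠ 1`.
-/

open FreeGroup

namespace FreeGroup

variable {α : Type*}

theorem IsReduced.head?_ne_of_cons {ℓ : α × Bool} {t : List (α × Bool)}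
    (h : IsReduced (ℓ :: t)) : t.head? ≠ some (ℓ.1, !ℓ.2) := by
  rcases t with _ | ⟨ℓ', t⟩
  · simp
  · have := (isReduced_cons_cons.1 h).1
    rintro ⟨⟩
    simp at this

theorem toWord_mk_singleton_mul_head?_eq_iff [DecidableEq α] (ℓ : α × Bool) (w : FreeGroup α) :
    (mk [ℓ] * w).toWord.head? = some ℓ ↔ w.toWord.head? ≠ some (ℓ.1, !ℓ.2) := by
  have hw : IsReduced w.toWord := isReduced_toWord
  rw [toWord_mul, toWord_mk, reduce_singleton, List.singleton_append, reduce.cons, hw.reduce_eq]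
  generalize w.toWord = L at hw ⊢
  rcases L with _ | ⟨⟨j, b⟩, t⟩
  · simp
  obtain ⟨i, a⟩ := ℓ
  by_cases hcancel : i = j ∧ a = !b
  · obtain ⟨rfl, rfl⟩ := hcancel
    simpa using hw.head?_ne_of_cons
  · simp only [hcancel, if_false, List.head?_cons, Option.some.injEq, Prod.mk.injEq, ne_eq,
      true_iff]
    rintro ⟨rfl, rfl⟩
    simp at hcancel

end FreeGroup

theorem MonoidHom.exists_left_mul_equivariant_of_injective {K G : Type*} [Group K] [Group G]
    (f : K →* G) (hf : Function.Injective f) : ∃ u : G → K, ∀ k x, u (f k * x) = k * u x := by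
  let rep : G → G := fun x => (Quotient.mk (QuotientGroup.rightRel f.range) x).out
  have hrep : ∀ x, x * (rep x)⁻¹ ∈ f.range := fun x =>
    QuotientGroup.rightRel_apply.1 (Quotient.exact (Quotient.out_eq _))
  have hrep_mul : ∀ k x, rep (f k * x) = rep x := fun k x =>
    congrArg Quotient.out <| Quotient.sound <| QuotientGroup.rightRel_apply.2 <| by
      rw [mul_inv_rev, mul_inv_cancel_left]
      exact inv_mem ⟨k, rfl⟩
  choose u hu using hrep
  refine ⟨u, fun k x => hf ?_⟩
  rw [_root_.map_mul, hu, hu, hrep_mul, mul_assoc]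

section PingPong

variable {G : Type*} [Group G] {α : Type*}

/-- `none` is the colour of the empty word, `some (i, true)` and `some (i, false)` those of words
starting with `a i` and `(a i)⁻¹`. -/
def IsPingPongColoring (a : α → G) (c : G → Option (α × Bool)) : Prop :=
  ∀ i x, c (a i * x) = some (i, true) ↔ c x ≠ some (i, false)

namespace IsPingPongColoring

variable {a : α → G} {c : G → Option (α × Bool)}

theorem lift_mk_singleton_mul (hc : IsPingPongColoring a c) (ℓ : α × Bool) (x : G) :
    c (lift a (mk [ℓ]) * x) = some ℓ ↔ c x ≠ some (ℓ.1, !ℓ.2) := by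
  obtain ⟨i, _ | _⟩ := ℓ
  · have := hc i ((a i)⁻¹ * x)
    rw [mul_inv_cancel_left] at this
    simp only [lift_mk, List.map_cons, List.map_nil, cond_false, List.prod_cons, List.prod_nil,
      mul_one, Bool.not_false]
    tauto
  · simpa [lift_mk] using hc i x

theorem apply_lift_mul [DecidableEq α] (hc : IsPingPongColoring a c) {x₀ : G}
    (hx₀ : c x₀ = none) (w : FreeGroup α) : c (lift a w * x₀) = w.toWord.head? := by
  suffices ∀ L, IsReduced L → c (lift a (mk L) * x₀) = L.head? by
    simpa only [mk_toWord] using this w.toWord isReduced_toWord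
  intro L hL
  induction L with
  | nil => simpa using hx₀
  | cons ℓ t ih =>
    rw [List.head?_cons, ← List.singleton_append, ← mul_mk, _root_.map_mul, mul_assoc,
      hc.lift_mk_singleton_mul, ih hL.tail]
    exact hL.head?_ne_of_cons

theorem injective_lift (hc : IsPingPongColoring a c) {x₀ : G} (hx₀ : c x₀ = none) :
    Function.Injective (lift a) := by
  classical
  rw [injective_iff_map_eq_one]
  intro w hw
  have := hc.apply_lift_mul hx₀ w
  rwa [hw, one_mul, hx₀, eq_comm, List.head?_eq_none_iff, toWord_eq_nil_iff] at this

end IsPingPongColoring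

theorem exists_isPingPongColoring_of_injective (f : FreeGroup α →* G)
    (hf : Function.Injective f) :
    ∃ c : G → Option (α × Bool), IsPingPongColoring (fun i => f (of i)) c ∧ ∃ x₀, c x₀ = none := by
  classical
  obtain ⟨u, hu⟩ := f.exists_left_mul_equivariant_of_injective hf
  refine ⟨fun x => (u x).toWord.head?, fun i x => ?_, f (u 1)⁻¹, ?_⟩
  · show (u (f (of i) * x)).toWord.head? = _ ↔ _
    rw [hu]
    exact toWord_mk_singleton_mul_head?_eq_iff (i, true) (u x)
  · simpa [hu] using hu (u 1)⁻¹ 1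

end PingPong

theorem exists_config_pattern_eq {G H : Type*} [Group G] [Group H] {n m : ℕ} {g : Fin n → G}
    {h : Fin n → H} {c : G → Fin m} {d : H → Fin m} (hcfg : Config g c = Config h d) (x : G) :
    ∃ y, d y = c x ∧ ∀ i, d (h i * y) = c (g i * x) := by
  have hx : (c x, fun i => c (g i * x)) ∈ Config g c := ⟨x, rfl, fun _ => rfl⟩
  rw [hcfg] at hx
  exact hx

theorem IsPingPongColoring.of_config_eq {G H : Type*} [Group G] [Group H] {α : Type*} {N m : ℕ}
    {g : Fin N → G} {h : Fin N → H} {c : G → Fin m} {d : H → Fin m}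
    (e : Option (α × Bool) ≃ Fin m) (ι : α → Fin N) (hcfg : Config g c = Config h d)
    (hc : IsPingPongColoring (fun i => g (ι i)) (e.symm ∘ c)) :
    IsPingPongColoring (fun i => h (ι i)) (e.symm ∘ d) := by
  intro i y
  obtain ⟨x, hx, hgx⟩ := exists_config_pattern_eq hcfg.symm y
  simpa only [Function.comp_apply, ← hx, ← hgx] using hc i x

theorem exists_generates_append {G : Type*} [Group G] [Group.FG G] {n : ℕ} (a : Fin n → G) :
    ∃ (k : ℕ) (t : Fin k → G), Generates (Fin.append a t) := by
  obtain ⟨S, hS⟩ := Group.fg_def.1 ‹_›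
  refine ⟨_, S.toList.get, eq_top_iff.2 (hS ▸ Subgroup.closure_mono ?_)⟩
  intro x hx
  obtain ⟨i, rfl⟩ : x ∈ Set.range S.toList.get := by simpa [Set.range_list_get] using hx
  exact ⟨Fin.natAdd n i, Fin.append_right _ _ i⟩

theorem stmt4_general (G H : Type*) [Group G] [Group H] [Group.FG G]
    (hGH : ConfigEquiv G H) (n : ℕ)
    (hfree : ∃ f : FreeGroup (Fin n) →* G, Function.Injective f) :
    ∃ f : FreeGroup (Fin n) →* H, Function.Injective f := by
  obtain ⟨f, hf⟩ := hfree
  obtain ⟨c, hc, x₀, hx₀⟩ := exists_isPingPongColoring_of_injective f hf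
  obtain ⟨k, t, hgen⟩ := exists_generates_append fun i => f (of i)
  let e := Fintype.equivFin (Option (Fin n × Bool))
  obtain ⟨h, d, -, hcfg⟩ := hGH.1 _ _ _ (e ∘ c) hgen
  obtain ⟨y₀, hy₀, -⟩ := exists_config_pattern_eq hcfg x₀
  have hd : IsPingPongColoring (fun i => h (Fin.castAdd k i)) (e.symm ∘ d) :=
    .of_config_eq e (Fin.castAdd k) hcfg (by simpa [Function.comp_def] using hc)
  exact ⟨_, hd.injective_lift (x₀ := y₀) (by simp [hy₀, hx₀])⟩

theorem stmt4 (G H : Type*) [Group G] [Group H] [Group.FG G] [Group.FG H]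
    (hGH : ConfigEquiv G H) (n : ℕ) (hn : 2 ≤ n)
    (hfree : ∃ f : FreeGroup (Fin n) →* G, Function.Injective f) :
    ∃ f : FreeGroup (Fin n) →* H, Function.Injective f :=
  stmt4_general G H hGH n hfree
end

section
/- Let G and H be finitely generated groups that are two-sided configuration equivalent, and suppose G has finitely many conjugacy classes (so H does as well). Then the centers Z(G) and Z(H) are isomorphic as groups. -/
/-- The two-sided configuration set of the configuration pair `(g, c)`: a two-sided
configuration is a tuple `(c₀, (c₁, …, c_n), (c_{n+1}, …, c_{2n}))` of colors realized by
some `x ∈ G`, i.e. `c x = c₀`, `c (gᵢ * x) = cᵢ` and `c (x * gᵢ) = c_{n+i}` for all `i`. -/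
def ConfigT {G : Type*} [Group G] {n m : ℕ} (g : Fin n → G) (c : G → Fin m) :
    Set (Fin m × (Fin n → Fin m) × (Fin n → Fin m)) :=
  { p | ∃ x : G, c x = p.1 ∧ (∀ i, c (g i * x) = p.2.1 i) ∧ (∀ i, c (x * g i) = p.2.2 i) }

/-- Two-sided configuration equivalence of groups. -/
def ConfigTEquiv (G H : Type*) [Group G] [Group H] : Prop :=
  (∀ (n m : ℕ) (g : Fin n → G) (c : G → Fin m), Generates g →
    ∃ (h : Fin n → H) (d : H → Fin m), Generates h ∧ ConfigT g c = ConfigT h d) ∧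
  (∀ (n m : ℕ) (h : Fin n → H) (d : H → Fin m), Generates h →
    ∃ (g : Fin n → G) (c : G → Fin m), Generates g ∧ ConfigT h d = ConfigT g c)

namespace Stmt7Aux

variable {G H : Type*} [Group G] [Group H]

lemma central_conj_eq {z x : G} (hz : z ∈ Subgroup.center G) (h : IsConj z x) : x = z := by
  obtain ⟨u, hu⟩ := isConj_iff.mp h
  have hc := (Subgroup.mem_center_iff.mp hz) u
  rw [← hu, hc]
  group

lemma isConj_one_left' {a : G} (h : IsConj 1 a) : a = 1 := by
  obtain ⟨u, hu⟩ := isConj_iff.mp h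
  rw [← hu]
  group

lemma exists_surj_of_inj {Q : Type*} {k : ℕ} (ι : Fin (k + 1) → Q) (hι : Function.Injective ι) :
    ∃ s : Q → Fin (k + 1), Function.Surjective s := by
  classical
  refine ⟨fun q => if h : ∃ i, ι i = q then h.choose else 0, fun j => ⟨ι j, ?_⟩⟩
  have h : ∃ i, ι i = ι j := ⟨j, rfl⟩
  simp only [dif_pos h]
  exact hι h.choose_spec

/-- If the source coloring is a class function, so is the target coloring. -/
lemma transfer {n m : ℕ} {g : Fin n → G} {c : G → Fin m} {h : Fin n → H} {d : H → Fin m}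
    (hgen : Generates h) (hc : ∀ u x : G, c (u * x * u⁻¹) = c x)
    (hcon : ConfigT g c = ConfigT h d) : ∀ u y : H, d (u * y * u⁻¹) = d y := by
  have hA : ∀ (x : G) (i : Fin n), c (g i * x) = c (x * g i) := by
    intro x i
    have h1 : x * (g i * x) * x⁻¹ = x * g i := by group
    rw [← hc x (g i * x), h1]
  have hdiag : ∀ p ∈ ConfigT g c, p.2.1 = p.2.2 := by
    rintro p ⟨x, -, h2, h3⟩
    funext i
    rw [← h2 i, ← h3 i, hA]
  have hstep : ∀ u ∈ Set.range h, ∀ y : H, d (u * y) = d (y * u) := by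
    rintro u ⟨i, rfl⟩ y
    have hp : ((d y, fun j => d (h j * y), fun j => d (y * h j)) :
        Fin m × (Fin n → Fin m) × (Fin n → Fin m)) ∈ ConfigT h d :=
      ⟨y, rfl, fun _ => rfl, fun _ => rfl⟩
    rw [← hcon] at hp
    exact congrFun (hdiag _ hp) i
  let S : Subgroup H :=
    { carrier := { u | ∀ y, d (u * y) = d (y * u) }
      one_mem' := by intro y; simp
      mul_mem' := by
        intro u v hu hv
        intro y
        calc d (u * v * y) = d (u * (v * y)) := by rw [mul_assoc]
          _ = d ((v * y) * u) := hu (v * y)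
          _ = d (v * (y * u)) := by rw [mul_assoc]
          _ = d ((y * u) * v) := hv (y * u)
          _ = d (y * (u * v)) := by rw [mul_assoc]
      inv_mem' := by
        intro u hu
        intro y
        have h0 := hu (u⁻¹ * y * u⁻¹)
        have e1 : u * (u⁻¹ * y * u⁻¹) = y * u⁻¹ := by group
        have e2 : u⁻¹ * y * u⁻¹ * u = u⁻¹ * y := by group
        rw [e1, e2] at h0
        exact h0.symm }
  have hS : ∀ u : H, ∀ y, d (u * y) = d (y * u) := by
    intro u
    have hsub : Set.range h ⊆ (S : Set H) := fun x hx => hstep x hx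
    have h2 : u ∈ Subgroup.closure (Set.range h) := by rw [hgen]; trivial
    exact (Subgroup.closure_le S).mpr hsub h2
  intro u y
  have e : u * y * u⁻¹ = u * (y * u⁻¹) := by group
  rw [e, hS u (y * u⁻¹)]
  have e2 : y * u⁻¹ * u = y := by group
  rw [e2]

lemma surj_transfer {n m : ℕ} {g : Fin n → G} {c : G → Fin m} {h : Fin n → H} {d : H → Fin m}
    (hcon : ConfigT g c = ConfigT h d) (hc : Function.Surjective c) :
    Function.Surjective d := by
  intro t
  obtain ⟨x, rfl⟩ := hc t
  have hp : ((c x, fun j => c (g j * x), fun j => c (x * g j)) :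
      Fin m × (Fin n → Fin m) × (Fin n → Fin m)) ∈ ConfigT g c :=
    ⟨x, rfl, fun _ => rfl, fun _ => rfl⟩
  rw [hcon] at hp
  obtain ⟨y, hy, -, -⟩ := hp
  exact ⟨y, hy⟩

lemma exists_gen_tuple (G : Type*) [Group G] [Group.FG G] :
    ∃ (k : ℕ) (f : Fin k → G), Generates f := by
  classical
  obtain ⟨S, hS⟩ := Group.fg_def.mp ‹Group.FG G›
  refine ⟨Fintype.card ↥S, (fun x : ↥S => (x : G)) ∘ (Fintype.equivFin ↥S).symm, ?_⟩
  unfold Generates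
  have hrange : Set.range ((fun x : ↥S => (x : G)) ∘ (Fintype.equivFin ↥S).symm)
      = (S : Set G) := by
    rw [Set.range_comp, Equiv.range_eq_univ, Set.image_univ]; simp
  rw [hrange, hS]

lemma classfn_conj {n m : ℕ} {c : G → Fin m} (hc : ∀ u x : G, c (u * x * u⁻¹) = c x)
    {x x' : G} (hxx : IsConj x x') : c x = c x' := by
  obtain ⟨u, hu⟩ := isConj_iff.mp hxx
  rw [← hu]
  exact (hc u x).symm

/-- Any type with at most `Nat.card Q` colors... the number of conjugacy classes of `H` is
at most that of `G`. -/
lemma classCard_le (G H : Type*) [Group G] [Group H] [Group.FG H]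
    (hdir : ∀ (n m : ℕ) (h : Fin n → H) (d : H → Fin m), Generates h →
      ∃ (g : Fin n → G) (c : G → Fin m), Generates g ∧ ConfigT h d = ConfigT g c)
    (hccG : Finite (ConjClasses G)) :
    Finite (ConjClasses H) ∧ Nat.card (ConjClasses H) ≤ Nat.card (ConjClasses G) := by
  classical
  letI := Fintype.ofFinite (ConjClasses G)
  set r := Fintype.card (ConjClasses G) with hr
  have main : ∀ ι : Fin (r + 1) → ConjClasses H, ¬ Function.Injective ι := by
    intro ι hι
    obtain ⟨s, hs⟩ := exists_surj_of_inj ι hι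
    set d' : H → Fin (r + 1) := fun y => s (ConjClasses.mk y) with hd'
    have d'class : ∀ u y : H, d' (u * y * u⁻¹) = d' y := by
      intro u y
      simp only [hd']
      congr 1
      exact ConjClasses.mk_eq_mk_iff_isConj.mpr ((isConj_iff.mpr ⟨u, rfl⟩).symm)
    have d'surj : Function.Surjective d' := by
      intro t
      obtain ⟨q, hq⟩ := hs t
      obtain ⟨y, hy⟩ := ConjClasses.mk_surjective q
      exact ⟨y, by rw [hd']; simp only; rw [hy, hq]⟩
    obtain ⟨k, hT, hTgen⟩ := exists_gen_tuple H
    obtain ⟨g', c', hg'gen, hcon⟩ := hdir k (r + 1) hT d' hTgen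
    have c'class : ∀ u x : G, c' (u * x * u⁻¹) = c' x := transfer hg'gen d'class hcon
    have c'surj : Function.Surjective c' := surj_transfer hcon d'surj
    have c'IsConj : ∀ (a b : G), IsConj a b → c' a = c' b :=
      fun a b hab => classfn_conj (n := k) c'class hab
    let cbar : ConjClasses G → Fin (r + 1) := Quotient.lift c' (fun a b hab => c'IsConj a b hab)
    have cbar_surj : Function.Surjective cbar := by
      intro t
      obtain ⟨x, hx⟩ := c'surj t
      exact ⟨ConjClasses.mk x, hx⟩
    have hcard := Fintype.card_le_of_surjective cbar cbar_surj
    simp only [Fintype.card_fin, ← hr] at hcard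
    omega
  constructor
  · by_contra hinf
    rw [not_finite_iff_infinite] at hinf
    exact main (fun i => Infinite.natEmbedding (ConjClasses H) (i : ℕ))
      (fun a b hab => Fin.val_injective ((Infinite.natEmbedding (ConjClasses H)).injective hab))
  · by_contra hle
    push_neg at hle
    have hfin : Finite (ConjClasses H) := by
      by_contra hinf
      rw [not_finite_iff_infinite] at hinf
      exact main (fun i => Infinite.natEmbedding (ConjClasses H) (i : ℕ))
        (fun a b hab => Fin.val_injective ((Infinite.natEmbedding (ConjClasses H)).injective hab))
    letI := Fintype.ofFinite (ConjClasses H)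
    have hr1 : r + 1 ≤ Fintype.card (ConjClasses H) := by
      rw [Nat.card_eq_fintype_card, Nat.card_eq_fintype_card, ← hr] at hle
      omega
    refine main (fun i => (Fintype.equivFin (ConjClasses H)).symm (Fin.castLE hr1 i)) ?_
    intro a b hab
    exact Fin.castLE_injective hr1 ((Fintype.equivFin (ConjClasses H)).symm.injective hab)

lemma classCard_ge (G H : Type*) [Group G] [Group H] [Group.FG G]
    (hdir : ∀ (n m : ℕ) (g : Fin n → G) (c : G → Fin m), Generates g →
      ∃ (h : Fin n → H) (d : H → Fin m), Generates h ∧ ConfigT g c = ConfigT h d)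
    (hccG : Finite (ConjClasses G)) (hccH : Finite (ConjClasses H)) :
    Nat.card (ConjClasses G) ≤ Nat.card (ConjClasses H) := by
  classical
  letI := Fintype.ofFinite (ConjClasses G)
  letI := Fintype.ofFinite (ConjClasses H)
  set r := Fintype.card (ConjClasses G) with hr
  set eG := Fintype.equivFin (ConjClasses G) with heG
  set c : G → Fin r := fun x => eG (ConjClasses.mk x) with hc
  have cclass : ∀ u x : G, c (u * x * u⁻¹) = c x := by
    intro u x
    simp only [hc]
    congr 1
    exact ConjClasses.mk_eq_mk_iff_isConj.mpr ((isConj_iff.mpr ⟨u, rfl⟩).symm)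
  have csurj : Function.Surjective c := by
    intro t
    obtain ⟨x, hx⟩ := ConjClasses.mk_surjective (eG.symm t)
    exact ⟨x, by simp only [hc]; rw [hx]; simp⟩
  obtain ⟨k, gT, hgT⟩ := exists_gen_tuple G
  obtain ⟨h, d, hhgen, hcon⟩ := hdir k r gT c hgT
  have dclass : ∀ u y : H, d (u * y * u⁻¹) = d y := transfer hhgen cclass hcon
  have dsurj : Function.Surjective d := surj_transfer hcon csurj
  have dIsConj : ∀ (a b : H), IsConj a b → d a = d b :=
    fun a b hab => classfn_conj (n := k) dclass hab
  let dbar : ConjClasses H → Fin r := Quotient.lift d (fun a b hab => dIsConj a b hab)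
  have dbar_surj : Function.Surjective dbar := by
    intro t
    obtain ⟨y, hy⟩ := dsurj t
    exact ⟨ConjClasses.mk y, hy⟩
  have := Fintype.card_le_of_surjective dbar dbar_surj
  simp only [Fintype.card_fin] at this
  rw [Nat.card_eq_fintype_card, Nat.card_eq_fintype_card]
  exact this

lemma core (G H : Type*) [Group G] [Group H] [Group.FG G]
    (hdir : ∀ (n m : ℕ) (g : Fin n → G) (c : G → Fin m), Generates g →
      ∃ (h : Fin n → H) (d : H → Fin m), Generates h ∧ ConfigT g c = ConfigT h d)
    (hccG : Finite (ConjClasses G)) (hccH : Finite (ConjClasses H))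
    (hcard : Nat.card (ConjClasses H) = Nat.card (ConjClasses G)) :
    (∃ f : Subgroup.center H → Subgroup.center G, Function.Injective f) ∧
      (Nat.card (Subgroup.center G) = Nat.card (Subgroup.center H) →
        Nonempty ((Subgroup.center G) ≃* (Subgroup.center H))) := by
  classical
  haveI finZG : Finite (Subgroup.center G) := by
    refine Finite.of_injective (fun z : Subgroup.center G => ConjClasses.mk (z : G)) ?_
    intro z z' hzz
    exact Subtype.ext (central_conj_eq z.2 (ConjClasses.mk_eq_mk_iff_isConj.mp hzz)).symm
  haveI finZH : Finite (Subgroup.center H) := by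
    refine Finite.of_injective (fun z : Subgroup.center H => ConjClasses.mk (z : H)) ?_
    intro z z' hzz
    exact Subtype.ext (central_conj_eq z.2 (ConjClasses.mk_eq_mk_iff_isConj.mp hzz)).symm
  letI := Fintype.ofFinite (ConjClasses G)
  letI := Fintype.ofFinite (ConjClasses H)
  letI : Fintype (Subgroup.center G) := Fintype.ofFinite _
  set r := Fintype.card (ConjClasses G) with hr
  have hcardF : Fintype.card (ConjClasses H) = r := by
    rw [hr, ← Nat.card_eq_fintype_card, ← Nat.card_eq_fintype_card]
    exact hcard
  set eG := Fintype.equivFin (ConjClasses G) with heG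
  set c : G → Fin r := fun x => eG (ConjClasses.mk x) with hcdef
  have cclass : ∀ u x : G, c (u * x * u⁻¹) = c x := by
    intro u x
    simp only [hcdef]
    congr 1
    exact ConjClasses.mk_eq_mk_iff_isConj.mpr ((isConj_iff.mpr ⟨u, rfl⟩).symm)
  have csurj : Function.Surjective c := by
    intro t
    obtain ⟨x, hx⟩ := ConjClasses.mk_surjective (eG.symm t)
    exact ⟨x, by simp only [hcdef]; rw [hx]; simp⟩
  have csurj2 := csurj
  choose rep0 hrep0 using csurj2
  have cconj : ∀ {x x' : G}, c x = c x' → IsConj x x' := by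
    intro x x' hxx
    simp only [hcdef] at hxx
    exact ConjClasses.mk_eq_mk_iff_isConj.mp (eG.injective hxx)
  -- the generating tuple: generators, central elements, distinguishing elements
  obtain ⟨S, hS⟩ := Group.fg_def.mp ‹Group.FG G›
  set f : (↥S ⊕ (↥(Subgroup.center G) ⊕ Fin r)) → G :=
    Sum.elim (fun s => (s : G)) (Sum.elim (fun z => (z : G)) (fun t => (rep0 t)⁻¹)) with hf
  set eI := Fintype.equivFin (↥S ⊕ (↥(Subgroup.center G) ⊕ Fin r)) with heI
  set N := Fintype.card (↥S ⊕ (↥(Subgroup.center G) ⊕ Fin r)) with hN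
  set g : Fin N → G := f ∘ eI.symm with hg
  have hgE : ∀ a, g (eI a) = f a := by
    intro a
    simp only [hg, Function.comp_apply, Equiv.symm_apply_apply]
  have hGen : Generates g := by
    unfold Generates
    apply le_antisymm le_top
    have hsub : (S : Set G) ⊆ Set.range g := by
      intro x hx
      exact ⟨eI (Sum.inl ⟨x, hx⟩), by rw [hgE]; rfl⟩
    calc (⊤ : Subgroup G) = Subgroup.closure (S : Set G) := hS.symm
      _ ≤ Subgroup.closure (Set.range g) := Subgroup.closure_mono hsub
  obtain ⟨h, d, hhgen, hcon⟩ := hdir N r g c hGen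
  have F1 : ∀ u y : H, d (u * y * u⁻¹) = d y := transfer hhgen cclass hcon
  have dsurj : Function.Surjective d := surj_transfer hcon csurj
  have dIsConj : ∀ (a b : H), IsConj a b → d a = d b :=
    fun a b hab => classfn_conj (n := N) F1 hab
  set dbar : ConjClasses H → Fin r := Quotient.lift d (fun a b hab => dIsConj a b hab)
    with hdbar
  have dbar_mk : ∀ y : H, dbar (ConjClasses.mk y) = d y := fun y => rfl
  have dbar_surj : Function.Surjective dbar := by
    intro t
    obtain ⟨y, hy⟩ := dsurj t
    exact ⟨ConjClasses.mk y, by rw [dbar_mk, hy]⟩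
  have dbar_bij : Function.Bijective dbar :=
    (Fintype.bijective_iff_surjective_and_card dbar).mpr
      ⟨dbar_surj, by rw [hcardF, Fintype.card_fin]⟩
  have fiber : ∀ {y y' : H}, d y = d y' → IsConj y y' := by
    intro y y' hyy
    exact ConjClasses.mk_eq_mk_iff_isConj.mp (dbar_bij.1 (by rw [dbar_mk, dbar_mk, hyy]))
  have Hside : ∀ (z : G), z ∈ Subgroup.center G → ∀ y : H, d y = c z →
      ∀ i, d (h i * y) = c (g i * z) := by
    intro z hz y hy i
    have hp : ((d y, fun j => d (h j * y), fun j => d (y * h j)) :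
        Fin r × (Fin N → Fin r) × (Fin N → Fin r)) ∈ ConfigT h d :=
      ⟨y, rfl, fun _ => rfl, fun _ => rfl⟩
    rw [← hcon] at hp
    obtain ⟨x, hx1, hx2, hx3⟩ := hp
    have hxz : x = z := central_conj_eq hz (cconj (show c z = c x by rw [hx1, hy]))
    have h2 := hx2 i
    rw [hxz] at h2
    exact h2.symm
  -- every central color of H is a central color of G
  have hzeta : ∀ w : H, w ∈ Subgroup.center H →
      rep0 (d w) ∈ Subgroup.center G ∧ c (rep0 (d w)) = d w := by
    intro w hw
    set t := d w with ht
    refine ⟨?_, hrep0 t⟩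
    by_contra hx
    set x := rep0 t with hxdef
    rw [Subgroup.mem_center_iff] at hx
    push_neg at hx
    obtain ⟨u, hu⟩ := hx
    have hne : u * x * u⁻¹ ≠ x := fun hE => hu (mul_inv_eq_iff_eq_mul.mp hE)
    have uniqcfg : ∀ p ∈ ConfigT g c, p.1 = t → ∀ i, p.2.1 i = d (h i * w) := by
      intro p hp hp1 i
      rw [hcon] at hp
      obtain ⟨y, hy1, hy2, hy3⟩ := hp
      have hyw : y = w := central_conj_eq hw (fiber ((hy1.trans hp1).symm))
      rw [← hy2 i, hyw]
    have hpx : ((c x, fun j => c (g j * x), fun j => c (x * g j)) :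
        Fin r × (Fin N → Fin r) × (Fin N → Fin r)) ∈ ConfigT g c :=
      ⟨x, rfl, fun _ => rfl, fun _ => rfl⟩
    have hpx' : ((c (u * x * u⁻¹), fun j => c (g j * (u * x * u⁻¹)),
        fun j => c ((u * x * u⁻¹) * g j)) :
        Fin r × (Fin N → Fin r) × (Fin N → Fin r)) ∈ ConfigT g c :=
      ⟨u * x * u⁻¹, rfl, fun _ => rfl, fun _ => rfl⟩
    set j := eI (Sum.inr (Sum.inr t)) with hj
    have hgj : g j = x⁻¹ := by rw [hj, hgE]; rfl
    have e1 := uniqcfg _ hpx (hrep0 t) j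
    have e2 := uniqcfg _ hpx' (by rw [cclass u x]; exact hrep0 t) j
    have key : c (g j * x) = c (g j * (u * x * u⁻¹)) := by
      simp only at e1 e2
      rw [e1, e2]
    rw [hgj] at key
    have h1 : IsConj (x⁻¹ * x) (x⁻¹ * (u * x * u⁻¹)) := cconj key
    rw [inv_mul_cancel] at h1
    have h2 := isConj_one_left' h1
    exact hne (inv_mul_eq_one.mp h2).symm
  have hz' : ∀ w : Subgroup.center H,
      rep0 (d ↑w) ∈ Subgroup.center G ∧ c (rep0 (d ↑w)) = d ↑w :=
    fun w => hzeta ↑w w.2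
  set ζ : Subgroup.center H → Subgroup.center G := fun w => ⟨rep0 (d ↑w), (hz' w).1⟩
    with hζdef
  have hζval : ∀ w : Subgroup.center H, c ↑(ζ w) = d ↑w := fun w => (hz' w).2
  have ζinj : Function.Injective ζ := by
    intro w w' hww
    have hdd : d ↑w = d ↑w' := by
      rw [← hζval w, ← hζval w', hww]
    exact Subtype.ext (central_conj_eq w'.2 (fiber hdd).symm)
  refine ⟨⟨ζ, ζinj⟩, ?_⟩
  intro hZcard
  letI : Fintype (Subgroup.center H) := Fintype.ofFinite _
  have hZF : Fintype.card (Subgroup.center H) = Fintype.card (Subgroup.center G) := by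
    rw [← Nat.card_eq_fintype_card, ← Nat.card_eq_fintype_card, hZcard]
  have ζbij : Function.Bijective ζ :=
    (Fintype.bijective_iff_injective_and_card ζ).mpr ⟨ζinj, hZF⟩
  choose A hA using ζbij.2
  have hAd : ∀ z : Subgroup.center G, c ↑z = d ↑(A z) := by
    intro z
    have h2 : (↑(ζ (A z)) : G) = ↑z := congrArg Subtype.val (hA z)
    rw [← h2]
    exact hζval (A z)
  have uniqA : ∀ (z : Subgroup.center G) (y : H), d y = c ↑z → y = ↑(A z) := by
    intro z y hy
    have hdd : d y = d ↑(A z) := by rw [hy, hAd z]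
    exact central_conj_eq (A z).2 (fiber hdd).symm
  have hgZ : ∀ z : Subgroup.center G, g (eI (Sum.inr (Sum.inl z))) = (z : G) := by
    intro z
    rw [hgE]; rfl
  have key : ∀ w z : Subgroup.center G,
      h (eI (Sum.inr (Sum.inl w))) * ↑(A z) = (↑(A (w * z)) : H) := by
    intro w z
    apply uniqA (w * z)
    have hH := Hside ↑z z.2 ↑(A z) (hAd z).symm (eI (Sum.inr (Sum.inl w)))
    rw [hgZ w] at hH
    rw [hH]
    norm_cast
  set φ : Subgroup.center G → Subgroup.center H := fun z => A z * (A 1)⁻¹ with hφdef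
  have hAw : ∀ w : Subgroup.center G,
      (↑(A w) : H) = h (eI (Sum.inr (Sum.inl w))) * ↑(A 1) := by
    intro w
    have hk := key w 1
    rw [mul_one] at hk
    exact hk.symm
  have φhom : ∀ w z, φ (w * z) = φ w * φ z := by
    intro w z
    apply Subtype.ext
    show (↑(A (w * z)) * (↑(A 1) : H)⁻¹ : H)
        = (↑(A w) * (↑(A 1) : H)⁻¹) * (↑(A z) * (↑(A 1) : H)⁻¹)
    rw [← key w z, hAw w, hAw z]
    group
  have φinj : Function.Injective φ := by
    intro w z hwz
    have hA' : A w = A z := by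
      have h2 : A w * (A 1)⁻¹ * (A 1) = A z * (A 1)⁻¹ * (A 1) := by rw [show A w * (A 1)⁻¹ = A z * (A 1)⁻¹ from hwz]
      simpa [mul_assoc] using h2
    have hcc2 : c ↑w = c ↑z := by rw [hAd w, hAd z, hA']
    exact Subtype.ext (central_conj_eq z.2 (cconj hcc2).symm)
  have φbij : Function.Bijective φ :=
    (Fintype.bijective_iff_injective_and_card φ).mpr ⟨φinj, hZF.symm⟩
  exact ⟨MulEquiv.ofBijective (MonoidHom.mk' φ φhom) φbij⟩

end Stmt7Aux

theorem stmt7 (G H : Type*) [Group G] [Group H] [Group.FG G] [Group.FG H]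
    (hGH : ConfigTEquiv G H) (hcc : Finite (ConjClasses G)) :
    Nonempty (Subgroup.center G ≃* Subgroup.center H) := by
  classical
  obtain ⟨hfinH, hle⟩ := Stmt7Aux.classCard_le G H hGH.2 hcc
  have hge := Stmt7Aux.classCard_ge G H hGH.1 hcc hfinH
  have hcards : Nat.card (ConjClasses H) = Nat.card (ConjClasses G) := le_antisymm hle hge
  obtain ⟨⟨ζ1, hζ1⟩, hiso⟩ := Stmt7Aux.core G H hGH.1 hcc hfinH hcards
  obtain ⟨⟨ζ2, hζ2⟩, -⟩ := Stmt7Aux.core H G hGH.2 hfinH hcc hcards.symm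
  haveI finZG : Finite (Subgroup.center G) := by
    refine Finite.of_injective (fun z : Subgroup.center G => ConjClasses.mk (z : G)) ?_
    intro z z' hzz
    exact Subtype.ext
      (Stmt7Aux.central_conj_eq z.2 (ConjClasses.mk_eq_mk_iff_isConj.mp hzz)).symm
  haveI finZH : Finite (Subgroup.center H) := by
    refine Finite.of_injective (fun z : Subgroup.center H => ConjClasses.mk (z : H)) ?_
    intro z z' hzz
    exact Subtype.ext
      (Stmt7Aux.central_conj_eq z.2 (ConjClasses.mk_eq_mk_iff_isConj.mp hzz)).symm
  have hc1 : Nat.card (Subgroup.center H) ≤ Nat.card (Subgroup.center G) :=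
    Nat.card_le_card_of_injective ζ1 hζ1
  have hc2 : Nat.card (Subgroup.center G) ≤ Nat.card (Subgroup.center H) :=
    Nat.card_le_card_of_injective ζ2 hζ2
  exact hiso (le_antisymm hc2 hc1)
end

section
/- Let G be a finitely presented group (i.e., isomorphic to a presented group on finitely many generators subject to finitely many relators) with finitely many conjugacy classes, and let H be a finitely generated group that is two-sided configuration equivalent to G. Then H is a quotient of G: there exists a surjective group homomorphism from G onto H. -/
/-!
Fix a finite presentation `⟨a | R⟩` of `G`. Color `G` by conjugacy class together with a
unique name for each element of a finite set `B` containing the values of all suffixes of the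
relators at `a` and a representative of every conjugacy class. A pair `(h, d)` on `H` with the
same configurations is refined by naming the suffix values of the relators at `h` and carried
back to a pair `(t, e)` on `G`. Since `t` generates `G`, the class part of `e` is a class
function, inducing a bijection of the finitely many conjugacy classes that maps singleton classes
to singleton classes; hence exactly one point `z` carries the color of `1`. Along a relator word
every step of a walk is forced, because the current point carries a unique color: the walk from
`z` through `t` ends at the color of `1`, so relators vanish at `t`, and then by the same
argument at `h`. Thus `aᵢ ↦ hᵢ` defines a homomorphism, onto because `h` generates `H`.
-/

open Function

section Configurations

variable {G H K : Type*} [Group G] [Group H] [Group K] {α β : Type*} {n : ℕ}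

/-- `ConfigT g c ⊆ ConfigT h d`, for colors in an arbitrary type. -/
def RealizesConfigs (g : Fin n → G) (c : G → α) (h : Fin n → H) (d : H → α) : Prop :=
  ∀ x, ∃ y, d y = c x ∧ (∀ i, d (h i * y) = c (g i * x)) ∧ ∀ i, d (y * h i) = c (x * g i)

namespace RealizesConfigs

variable {g : Fin n → G} {c : G → α} {h : Fin n → H} {d : H → α}

lemma of_configT_eq {m : ℕ} {c : G → Fin m} {d : H → Fin m} (hEq : ConfigT g c = ConfigT h d) :
    RealizesConfigs g c h d := by
  intro x
  have hx : (c x, fun i => c (g i * x), fun i => c (x * g i)) ∈ ConfigT h d :=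
    hEq ▸ ⟨x, rfl, fun _ => rfl, fun _ => rfl⟩
  obtain ⟨y, hy⟩ := hx
  exact ⟨y, hy⟩

lemma comp (hR : RealizesConfigs g c h d) (π : α → β) : RealizesConfigs g (π ∘ c) h (π ∘ d) := by
  intro x
  obtain ⟨y, h₀, hl, hr⟩ := hR x
  exact ⟨y, congrArg π h₀, fun i => congrArg π (hl i), fun i => congrArg π (hr i)⟩

lemma trans {k : Fin n → K} {f : K → α} (hgh : RealizesConfigs g c h d)
    (hhk : RealizesConfigs h d k f) : RealizesConfigs g c k f := by
  intro x
  obtain ⟨y, h₀, hl, hr⟩ := hgh x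
  obtain ⟨z, h₀', hl', hr'⟩ := hhk y
  exact ⟨z, h₀'.trans h₀, fun i => (hl' i).trans (hl i), fun i => (hr' i).trans (hr i)⟩

end RealizesConfigs

lemma ConfigTEquiv.symm (hGH : ConfigTEquiv G H) : ConfigTEquiv H G := ⟨hGH.2, hGH.1⟩

lemma ConfigTEquiv.exists_realizesConfigs [Finite α] (hGH : ConfigTEquiv G H) {g : Fin n → G}
    (hg : Generates g) (c : G → α) :
    ∃ (h : Fin n → H) (d : H → α), Generates h ∧
      RealizesConfigs g c h d ∧ RealizesConfigs h d g c := by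
  let ψ := Finite.equivFin α
  obtain ⟨h, d, hh, hEq⟩ := hGH.1 _ _ g (ψ ∘ c) hg
  have hc : ψ.symm ∘ ψ ∘ c = c := by ext; simp
  refine ⟨h, ψ.symm ∘ d, hh, ?_, ?_⟩
  · simpa only [hc] using (RealizesConfigs.of_configT_eq hEq).comp ψ.symm
  · simpa only [hc] using (RealizesConfigs.of_configT_eq hEq.symm).comp ψ.symm

end Configurations

section Isolation

variable {X α β : Type*}

def Isolates (c : X → α) (u : X) : Prop := ∀ v, c v = c u → v = u

lemma Isolates.of_comp {c : X → α} {f : α → β} {u : X} (hu : Isolates (f ∘ c) u) :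
    Isolates c u :=
  fun v hv => hu v (congrArg f hv)

open Classical in
noncomputable def nameOn (S : Set X) (x : X) : Option S :=
  if hx : x ∈ S then some ⟨x, hx⟩ else none

lemma isolates_nameOn {S : Set X} {u : X} (hu : u ∈ S) : Isolates (nameOn S) u := by
  intro v hv
  by_cases hvS : v ∈ S
  · simpa [nameOn, hu, hvS] using hv
  · simp [nameOn, hu, hvS] at hv

lemma isolates_prod_nameOn (f : X → α) {S : Set X} {u : X} (hu : u ∈ S) :
    Isolates (fun x => (f x, nameOn S x)) u :=
  Isolates.of_comp (f := Prod.snd) (isolates_nameOn hu)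

end Isolation

section Tracking

variable {G H : Type*} [Group G] [Group H] {α : Type*} {n : ℕ}
  {t : Fin n → G} {e : G → α} {h : Fin n → H} {d : H → α}

def suffixValues (f : Fin n → G) (rels : Set (FreeGroup (Fin n))) : Set G :=
  ⋃ r ∈ rels, (fun L => FreeGroup.lift f (FreeGroup.mk L)) '' {L | L ∈ r.toWord.tails}

lemma suffixValues_finite (f : Fin n → G) {rels : Set (FreeGroup (Fin n))} (hrels : rels.Finite) :
    (suffixValues f rels).Finite :=
  hrels.biUnion fun r _ => r.toWord.tails.finite_toSet.image _

lemma lift_mk_mem_suffixValues (f : Fin n → G) {rels : Set (FreeGroup (Fin n))}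
    {r : FreeGroup (Fin n)} (hr : r ∈ rels) {L : List (Fin n × Bool)} (hL : L ∈ r.toWord.tails) :
    FreeGroup.lift f (FreeGroup.mk L) ∈ suffixValues f rels :=
  Set.mem_biUnion hr ⟨L, hL, rfl⟩

lemma lift_mem_suffixValues (f : Fin n → G) {rels : Set (FreeGroup (Fin n))}
    {r : FreeGroup (Fin n)} (hr : r ∈ rels) : FreeGroup.lift f r ∈ suffixValues f rels := by
  simpa only [FreeGroup.mk_toWord] using
    lift_mk_mem_suffixValues f hr ((List.mem_tails _ _).2 (List.suffix_refl _))

lemma lift_mk_cons (f : Fin n → G) (p : Fin n × Bool) (L : List (Fin n × Bool)) :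
    FreeGroup.lift f (FreeGroup.mk (p :: L)) =
      cond p.2 (f p.1) (f p.1)⁻¹ * FreeGroup.lift f (FreeGroup.mk L) := by
  simp only [FreeGroup.lift_mk, List.map_cons, List.prod_cons]

namespace RealizesConfigs

/-- Where `d` isolates `y`, the point of `(h, d)` realizing the configuration of `x` must be `y`
itself, so the left neighbours of `x` and `y` carry the same colors. -/
lemma color_mul_of_isolates (hR : RealizesConfigs t e h d) {x : G} {y : H} (hxy : e x = d y)
    (hy : Isolates d y) (i : Fin n) :
    e (t i * x) = d (h i * y) ∧ e ((t i)⁻¹ * x) = d ((h i)⁻¹ * y) := by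
  constructor
  · obtain ⟨y', hy', hl, -⟩ := hR x
    rw [← hy y' (hy'.trans hxy), hl]
  · obtain ⟨y', hy', hl, -⟩ := hR ((t i)⁻¹ * x)
    have : h i * y' = y := hy _ (by rw [hl, mul_inv_cancel_left, hxy])
    rw [← hy', ← this, inv_mul_cancel_left]

lemma color_lift_mk_mul (hR : RealizesConfigs t e h d) {x₀ : G} (hx₀ : e x₀ = d 1)
    (L : List (Fin n × Bool))
    (hL : ∀ L' ∈ L.tails, Isolates d (FreeGroup.lift h (FreeGroup.mk L'))) :
    e (FreeGroup.lift t (FreeGroup.mk L) * x₀) = d (FreeGroup.lift h (FreeGroup.mk L)) := by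
  induction L with
  | nil => simpa using hx₀
  | cons p L ih =>
    have hLL : ∀ L' ∈ L.tails, Isolates d (FreeGroup.lift h (FreeGroup.mk L')) :=
      fun L' hL' => hL L' (List.tails_cons p L ▸ List.mem_cons_of_mem _ hL')
    have step := hR.color_mul_of_isolates (ih hLL)
      (hLL L ((List.mem_tails _ _).2 (List.suffix_refl L))) p.1
    rw [lift_mk_cons, lift_mk_cons, mul_assoc]
    cases p.2
    · exact step.2
    · exact step.1

variable {rels : Set (FreeGroup (Fin n))} {x₀ : G} {r : FreeGroup (Fin n)}

lemma color_lift_mul_of_mem (hR : RealizesConfigs t e h d)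
    (hiso : ∀ y ∈ suffixValues h rels, Isolates d y) (hx₀ : e x₀ = d 1) (hr : r ∈ rels) :
    e (FreeGroup.lift t r * x₀) = d (FreeGroup.lift h r) := by
  simpa only [FreeGroup.mk_toWord] using hR.color_lift_mk_mul hx₀ r.toWord
    fun L hL => hiso _ (lift_mk_mem_suffixValues h hr hL)

lemma lift_eq_one_of_isolates (hR : RealizesConfigs t e h d)
    (hiso : ∀ y ∈ suffixValues h rels, Isolates d y) (hx₀ : e x₀ = d 1) (hr : r ∈ rels)
    (hx₀iso : Isolates e x₀) (hr₁ : FreeGroup.lift h r = 1) : FreeGroup.lift t r = 1 := by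
  have hwalk := hR.color_lift_mul_of_mem hiso hx₀ hr
  rw [hr₁, ← hx₀] at hwalk
  simpa using hx₀iso _ hwalk

lemma lift_eq_one_of_lift_eq_one (hR : RealizesConfigs t e h d)
    (hiso : ∀ y ∈ suffixValues h rels, Isolates d y) (hx₀ : e x₀ = d 1) (hr : r ∈ rels)
    (hr₁ : FreeGroup.lift t r = 1) : FreeGroup.lift h r = 1 := by
  have hwalk := hR.color_lift_mul_of_mem hiso hx₀ hr
  rw [hr₁, one_mul, hx₀] at hwalk
  exact (hiso _ (lift_mem_suffixValues h hr) 1 hwalk).symm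

end RealizesConfigs
end Tracking

section Rigidity

variable {G : Type*} [Group G] {α β : Type*} {n : ℕ}

lemma map_mul_comm_of_closure_eq_top {s : Set G} (hs : Subgroup.closure s = ⊤) (f : G → β)
    (hf : ∀ g ∈ s, ∀ x, f (g * x) = f (x * g)) (g x : G) : f (g * x) = f (x * g) := by
  have hg : g ∈ Subgroup.closure s := hs ▸ Subgroup.mem_top g
  induction hg using Subgroup.closure_induction generalizing x with
  | mem g hg => exact hf g hg x
  | one => simp
  | mul g g' _ _ ihg ihg' => rw [mul_assoc, ihg, mul_assoc, ihg', mul_assoc]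
  | inv g _ ihg => simpa [mul_assoc] using (ihg (g⁻¹ * x * g⁻¹)).symm

lemma exists_conjClasses_factor (f : G → β) (hf : ∀ g x, f (g * x) = f (x * g)) :
    ∃ F : ConjClasses G → β, ∀ x, f x = F (ConjClasses.mk x) := by
  refine ⟨Quotient.lift f fun u v huv => ?_, fun _ => rfl⟩
  obtain ⟨w, rfl⟩ := isConj_iff.1 huv
  rw [mul_assoc, hf, inv_mul_cancel_right]

lemma conjClassesMk_mul_comm (g x : G) : ConjClasses.mk (g * x) = ConjClasses.mk (x * g) :=
  ConjClasses.mk_eq_mk_iff_isConj.2 (isConj_iff.2 ⟨g⁻¹, by group⟩)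

namespace RealizesConfigs

variable {a t : Fin n → G} {c e : G → α} {κ : α → ConjClasses G}

lemma exists_conjClasses_factor_of_generates (hκ : ∀ x, κ (c x) = ConjClasses.mk x)
    (ht : Generates t) (hta : RealizesConfigs t e a c) :
    ∃ F : ConjClasses G → ConjClasses G, ∀ x, κ (e x) = F (ConjClasses.mk x) := by
  refine exists_conjClasses_factor _ (map_mul_comm_of_closure_eq_top ht (κ ∘ e) ?_)
  rintro _ ⟨i, rfl⟩ x
  -- `t i * x` and `x * t i` carry the colors of the conjugate elements `a i * y` and `y * a i`
  obtain ⟨y, -, hl, hr⟩ := hta x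
  rw [comp_apply, comp_apply, ← hl, ← hr, hκ, hκ, conjClassesMk_mul_comm]

variable {F : ConjClasses G → ConjClasses G}

lemma surjective_of_factor (hκ : ∀ x, κ (c x) = ConjClasses.mk x)
    (hat : RealizesConfigs a c t e) (hF : ∀ x, κ (e x) = F (ConjClasses.mk x)) : Surjective F := by
  intro γ
  obtain ⟨x, rfl⟩ := ConjClasses.mk_surjective γ
  obtain ⟨y, hy, -⟩ := hat x
  exact ⟨ConjClasses.mk y, by rw [← hF, hy, hκ]⟩

/-- If `γ = {u}`, every point of `F γ` is realized by `u`, so all of them share one `c`-color;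
that color isolates the representative of `F γ`. -/
lemma mapsTo_subsingleton_carrier (hκ : ∀ x, κ (c x) = ConjClasses.mk x)
    (hreps : ∀ γ : ConjClasses G, ∃ u ∈ γ.carrier, Isolates c u) (hat : RealizesConfigs a c t e)
    (hF : ∀ x, κ (e x) = F (ConjClasses.mk x)) (hFinj : Injective F) :
    Set.MapsTo F {γ | γ.carrier.Subsingleton} {γ | γ.carrier.Subsingleton} := by
  intro γ hγ
  obtain ⟨u, hu, hiso⟩ := hreps (F γ)
  have hcolor : ∀ x ∈ (F γ).carrier, c x = c u := by
    have hrealizer : ∀ x ∈ (F γ).carrier, ∃ y ∈ γ.carrier, e y = c x := by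
      intro x hx
      obtain ⟨y, hy, -⟩ := hat x
      refine ⟨y, ConjClasses.mem_carrier_iff_mk_eq.2 (hFinj ?_), hy⟩
      rw [← hF, hy, hκ, ← ConjClasses.mem_carrier_iff_mk_eq.1 hx]
    intro x hx
    obtain ⟨y, hy, hyx⟩ := hrealizer x hx
    obtain ⟨y', hy', hy'u⟩ := hrealizer u hu
    rw [← hyx, ← hy'u, hγ hy hy']
  intro x hx x' hx'
  rw [hiso x (hcolor x hx), hiso x' (hcolor x' hx')]

end RealizesConfigs

lemma carrier_mk_one_subsingleton : (ConjClasses.mk (1 : G)).carrier.Subsingleton := by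
  intro x hx y hy
  simp only [ConjClasses.mem_carrier_iff_mk_eq, ConjClasses.mk_eq_mk_iff_isConj,
    isConj_one_left] at hx hy
  rw [hx, hy]

theorem exists_isolates_color_one [Finite (ConjClasses G)] {a t : Fin n → G} {c e : G → α}
    (κ : α → ConjClasses G) (hκ : ∀ x, κ (c x) = ConjClasses.mk x)
    (hreps : ∀ γ : ConjClasses G, ∃ u ∈ γ.carrier, Isolates c u) (ht : Generates t)
    (hat : RealizesConfigs a c t e) (hta : RealizesConfigs t e a c) :
    ∃ z, e z = c 1 ∧ Isolates e z := by
  obtain ⟨F, hF⟩ := hta.exists_conjClasses_factor_of_generates hκ ht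
  have hFinj : Injective F :=
    Finite.injective_iff_surjective.2 (hat.surjective_of_factor hκ hF)
  have hmaps := hat.mapsTo_subsingleton_carrier hκ hreps hF hFinj
  obtain ⟨γ, hγ, hFγ⟩ := ((Set.toFinite _).injOn_iff_bijOn_of_mapsTo hmaps).1 hFinj.injOn
    |>.surjOn carrier_mk_one_subsingleton
  obtain ⟨z, hz, -⟩ := hat 1
  have hclass : ∀ x, e x = c 1 → x ∈ γ.carrier := fun x hx =>
    ConjClasses.mem_carrier_iff_mk_eq.2 (hFinj (by rw [← hF, hx, hκ, hFγ]))
  exact ⟨z, hz, fun v hv => hγ (hclass v (hv.trans hz)) (hclass z hz)⟩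

end Rigidity

section Presentations

variable {G H : Type*} [Group G] [Group H] {ι : Type*} {rels : Set (FreeGroup ι)}

lemma PresentedGroup.toGroup_surjective {h : ι → H} (hrel : ∀ r ∈ rels, FreeGroup.lift h r = 1)
    (hh : Subgroup.closure (Set.range h) = ⊤) : Surjective (PresentedGroup.toGroup hrel) :=
  Surjective.of_comp (g := PresentedGroup.mk rels)
    (FreeGroup.lift_surjective_iff_closure_range_eq_top.2 hh)

lemma MulEquiv.lift_symm_comp_of (eG : G ≃* PresentedGroup rels) :
    FreeGroup.lift (eG.symm ∘ PresentedGroup.of) =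
      eG.symm.toMonoidHom.comp (PresentedGroup.mk rels) :=
  FreeGroup.ext_hom _ _ fun _ => by simp [PresentedGroup.of]

lemma MulEquiv.closure_range_symm_comp_of (eG : G ≃* PresentedGroup rels) :
    Subgroup.closure (Set.range (eG.symm ∘ PresentedGroup.of)) = ⊤ := by
  rw [← FreeGroup.lift_surjective_iff_closure_range_eq_top, eG.lift_symm_comp_of]
  exact eG.symm.surjective.comp (PresentedGroup.mk_surjective _)

lemma MulEquiv.lift_symm_comp_of_eq_one (eG : G ≃* PresentedGroup rels) {r : FreeGroup ι}
    (hr : r ∈ rels) : FreeGroup.lift (eG.symm ∘ PresentedGroup.of) r = 1 := by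
  simp [eG.lift_symm_comp_of, PresentedGroup.one_of_mem hr]

end Presentations

theorem ConfigTEquiv.lift_eq_one {G H : Type*} [Group G] [Group H] [Finite (ConjClasses G)]
    {α : Type*} [Finite α] {n : ℕ} (hGH : ConfigTEquiv G H) {a : Fin n → G} {c : G → α}
    {h : Fin n → H} {d : H → α} (κ : α → ConjClasses G) (hκ : ∀ x, κ (c x) = ConjClasses.mk x)
    (hreps : ∀ γ : ConjClasses G, ∃ u ∈ γ.carrier, Isolates c u) {rels : Set (FreeGroup (Fin n))}
    (hrels : rels.Finite) (hsuff : ∀ u ∈ suffixValues a rels, Isolates c u) (hh : Generates h)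
    (hah : RealizesConfigs a c h d) (hha : RealizesConfigs h d a c)
    (hrel : ∀ r ∈ rels, FreeGroup.lift a r = 1) : ∀ r ∈ rels, FreeGroup.lift h r = 1 := by
  have : Finite (suffixValues h rels) := (suffixValues_finite h hrels).to_subtype
  obtain ⟨t, e, ht, hhe, heh⟩ :=
    hGH.symm.exists_realizesConfigs hh fun y => (d y, nameOn (suffixValues h rels) y)
  have hat : RealizesConfigs a c t (Prod.fst ∘ e) := hah.trans (hhe.comp Prod.fst)
  have hta : RealizesConfigs t (Prod.fst ∘ e) a c := (heh.comp Prod.fst).trans hha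
  obtain ⟨z, hz, hziso⟩ := exists_isolates_color_one κ hκ hreps ht hat hta
  obtain ⟨x₀, hx₀, -⟩ := hhe 1
  exact fun r hr => heh.lift_eq_one_of_lift_eq_one (fun u hu => isolates_prod_nameOn _ hu) hx₀ hr
    (hta.lift_eq_one_of_isolates hsuff hz hr hziso (hrel r hr))

theorem stmt8_general (G H : Type*) [Group G] [Group H]
    (hfp : ∃ (n : ℕ) (rels : Finset (FreeGroup (Fin n))),
      Nonempty (G ≃* PresentedGroup (rels : Set (FreeGroup (Fin n)))))
    (hcc : Finite (ConjClasses G))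
    (hGH : ConfigTEquiv G H) :
    ∃ φ : G →* H, Function.Surjective φ := by
  obtain ⟨n, rels, ⟨eG⟩⟩ := hfp
  let a : Fin n → G := eG.symm ∘ PresentedGroup.of
  let B : Set G := suffixValues a rels ∪ Set.range fun γ : ConjClasses G => γ.out
  have : Finite B :=
    ((suffixValues_finite a rels.finite_toSet).union (Set.finite_range _)).to_subtype
  let c : G → ConjClasses G × Option B := fun x => (ConjClasses.mk x, nameOn B x)
  have hcB : ∀ u ∈ B, Isolates c u := fun u hu => isolates_prod_nameOn _ hu
  obtain ⟨h, d, hh, hah, hha⟩ := hGH.exists_realizesConfigs eG.closure_range_symm_comp_of c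
  have hrel : ∀ r ∈ (rels : Set (FreeGroup (Fin n))), FreeGroup.lift h r = 1 :=
    hGH.lift_eq_one Prod.fst (fun _ => rfl)
      (fun γ => ⟨γ.out, ConjClasses.mem_carrier_iff_mk_eq.2 γ.out_eq, hcB _ (Or.inr ⟨γ, rfl⟩)⟩)
      rels.finite_toSet (fun u hu => hcB u (Or.inl hu)) hh hah hha
      fun _ => eG.lift_symm_comp_of_eq_one
  exact ⟨(PresentedGroup.toGroup hrel).comp eG.toMonoidHom,
    (PresentedGroup.toGroup_surjective hrel hh).comp eG.surjective⟩

theorem stmt8 (G H : Type*) [Group G] [Group H] [Group.FG G] [Group.FG H]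
    (hfp : ∃ (n : ℕ) (rels : Finset (FreeGroup (Fin n))),
      Nonempty (G ≃* PresentedGroup (rels : Set (FreeGroup (Fin n)))))
    (hcc : Finite (ConjClasses G))
    (hGH : ConfigTEquiv G H) :
    ∃ φ : G →* H, Function.Surjective φ :=
  stmt8_general G H hfp hcc hGH
end

section
/- Let G and H be finitely generated groups that are two-sided configuration equivalent. Let g be an ordered generating tuple of G and let c_1, …, c_r be finitely many colorings of G (c_i : G → {1, …, m_i}). Then there exist an ordered generating tuple h of H of the same length as g and colorings d_1, …, d_r of H (d_i : H → {1, …, m_i}) such that Con_t(g, c_i) = Con_t(h, d_i) for every i = 1, …, r. -/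
/-- Recoloring lemma: the configuration set of a composed coloring is the image of the
configuration set under the corresponding map on configurations. -/
lemma ConfigT_comp {G : Type*} [Group G] {n m m' : ℕ} (g : Fin n → G) (c : G → Fin m)
    (f : Fin m → Fin m') :
    ConfigT g (fun x => f (c x)) =
      (fun p : Fin m × (Fin n → Fin m) × (Fin n → Fin m) =>
        (f p.1, fun i => f (p.2.1 i), fun i => f (p.2.2 i))) '' ConfigT g c := by
  ext p
  constructor
  · rintro ⟨x, h1, h2, h3⟩
    refine ⟨(c x, fun i => c (g i * x), fun i => c (x * g i)), ⟨x, rfl, fun _ => rfl, fun _ => rfl⟩, ?_⟩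
    simp only [Prod.ext_iff]
    exact ⟨h1, funext h2, funext h3⟩
  · rintro ⟨q, ⟨x, h1, h2, h3⟩, rfl⟩
    exact ⟨x, by simp [h1], fun i => by simp [h2 i], fun i => by simp [h3 i]⟩

theorem stmt9 (G H : Type*) [Group G] [Group H] [Group.FG G] [Group.FG H]
    (hGH : ConfigTEquiv G H) {n r : ℕ} (g : Fin n → G) (hg : Generates g)
    (m : Fin r → ℕ) (c : ∀ i : Fin r, G → Fin (m i)) :
    ∃ h : Fin n → H, Generates h ∧
      ∃ d : ∀ i : Fin r, H → Fin (m i), ∀ i, ConfigT g (c i) = ConfigT h (d i) := by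
  -- combine colorings into one via an equivalence with `Fin M`
  set E := ∀ i : Fin r, Fin (m i) with hE
  let e : E ≃ Fin (Fintype.card E) := Fintype.equivFin E
  let C : G → Fin (Fintype.card E) := fun x => e (fun i => c i x)
  obtain ⟨h, D, hgen, hconf⟩ := hGH.1 n (Fintype.card E) g C hg
  refine ⟨h, hgen, fun i y => e.symm (D y) i, fun i => ?_⟩
  set f : Fin (Fintype.card E) → Fin (m i) := fun v => e.symm v i with hf
  have hc : c i = fun x => f (C x) := by
    funext x
    simp [C, f]
  have hd : (fun i y => e.symm (D y) i) i = fun y => f (D y) := rfl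
  rw [hc, hd, ConfigT_comp, hconf, ← ConfigT_comp]
end

section
/- Let G and H be finitely generated groups that are two-sided configuration equivalent. Then the direct product of the quotients G/N, taken over all normal subgroups N of G of finite index, is isomorphic as a group to the direct product of the quotients H/M, taken over all normal subgroups M of H of finite index. -/
/-- The direct product of the quotients `G ⧸ N`, taken over all normal subgroups `N` of `G`
of finite index. -/
def FiniteIndexQuotProd (G : Type*) [Group G] : Type _ :=
  ∀ N : {N : Subgroup G // N.Normal ∧ N.index ≠ 0}, G ⧸ N.1

noncomputable instance (G : Type*) [Group G] : Group (FiniteIndexQuotProd G) :=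
  @Pi.group _ _ fun N => @QuotientGroup.Quotient.group G _ N.1 N.2.1

/-!
Colour `G` by the cosets of a normal subgroup `N` of finite index. A configuration pair of `H`
with the same configuration set has a colouring that, read through the cosets, intertwines left
multiplication by the generators of `H` with left multiplication by those of `G ⧸ N`; hence it is
a translate of a homomorphism of `H` onto `G ⧸ N`. So every finite quotient of `G` is one of `H`
and vice versa. Applied to the intersection `Kₙ` of all normal subgroups of index at most `n`
(of finite index since the groups are finitely generated), this gives `G ⧸ Kₙ G ≃* H ⧸ Kₙ H`.
Such an isomorphism matches the normal subgroups of index `n` of `G` and `H` with isomorphic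
quotients, and these matchings together reindex one product as the other.
-/

open Subgroup QuotientGroup

theorem exists_monoidHom_of_forall_map_mul_left {H Q ι : Type*} [Group H] [Group Q] {h : ι → H}
    (hh : closure (Set.range h) = ⊤) {ψ : H → Q} {a : ι → Q}
    (hψ : ∀ i y, ψ (h i * y) = a i * ψ y) : ∃ φ : H →* Q, ∀ i, φ (h i) = a i := by
  set ψ' : H → Q := fun y => ψ y * (ψ 1)⁻¹
  have hψ' (i : ι) (y : H) : ψ' (h i * y) = a i * ψ' y := by simp only [ψ', hψ, mul_assoc]
  have hψ'_inv (i : ι) (y : H) : ψ' ((h i)⁻¹ * y) = (a i)⁻¹ * ψ' y := by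
    rw [eq_inv_mul_iff_mul_eq, ← hψ', mul_inv_cancel_left]
  have hψ'_one : ψ' 1 = 1 := mul_inv_cancel _
  have hψ'_gen (i : ι) : ψ' (h i) = a i := by rw [← mul_one (h i), hψ', hψ'_one, mul_one]
  have hgen : Submonoid.closure (Set.range h ∪ (Set.range h)⁻¹) = ⊤ := by
    rw [← closure_toSubmonoid, hh, top_toSubmonoid]
  refine ⟨MonoidHom.ofClosureMEqTopLeft ψ' hgen hψ'_one ?_, fun i => ?_⟩
  · rintro x (⟨i, rfl⟩ | ⟨i, hi⟩) y
    · rw [hψ', hψ'_gen]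
    · rw [inv_eq_iff_eq_inv.1 hi.symm, hψ'_inv, ← mul_one (h i)⁻¹, hψ'_inv, hψ'_one, mul_one]
  · exact hψ'_gen i

theorem exists_surjective_of_configT_subset {G H Q : Type*} [Group G] [Group H] [Group Q]
    {n m : ℕ} {g : Fin n → G} {h : Fin n → H} (hg : Generates g) (hh : Generates h)
    {π : G →* Q} (hπ : Function.Surjective π) {β : Q → Fin m} (hβ : Function.Injective β)
    {d : H → Fin m} (hcfg : ConfigT h d ⊆ ConfigT g (β ∘ π)) :
    ∃ φ : H →* Q, Function.Surjective φ := by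
  have hreal (y : H) : ∃ x, β (π x) = d y ∧ ∀ i, β (π (g i * x)) = d (h i * y) := by
    obtain ⟨x, hx, hgx, -⟩ := hcfg (show (d y, fun i => d (h i * y), fun i => d (y * h i)) ∈
      ConfigT h d from ⟨y, rfl, fun _ => rfl, fun _ => rfl⟩)
    exact ⟨x, hx, hgx⟩
  choose x hx hgx using hreal
  have hψ (i : Fin n) (y : H) : π (x (h i * y)) = π (g i) * π (x y) :=
    hβ <| by rw [hx, ← hgx, map_mul]
  obtain ⟨φ, hφ⟩ := exists_monoidHom_of_forall_map_mul_left (ψ := fun y => π (x y)) hh hψ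
  have hπg : closure (Set.range (π ∘ g)) = ⊤ := by
    rw [Set.range_comp, ← MonoidHom.map_closure, hg, map_top_of_surjective _ hπ]
  refine ⟨φ, MonoidHom.range_eq_top.1 ?_⟩
  rw [eq_top_iff, ← hπg, closure_le]
  rintro _ ⟨i, rfl⟩
  exact ⟨h i, hφ i⟩

def ConfigTRealizedIn (G H : Type*) [Group G] [Group H] : Prop :=
  ∀ (n m : ℕ) (g : Fin n → G) (c : G → Fin m), Generates g →
    ∃ (h : Fin n → H) (d : H → Fin m), Generates h ∧ ConfigT g c = ConfigT h d

theorem ConfigTRealizedIn.exists_surjective {G H Q : Type*} [Group G] [Group H] [Group Q]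
    [Group.FG G] [Finite Q] (hGH : ConfigTRealizedIn G H) {π : G →* Q}
    (hπ : Function.Surjective π) : ∃ φ : H →* Q, Function.Surjective φ := by
  obtain ⟨n, ⟨P⟩⟩ := Group.fg_iff_nonempty_finite_generators.1 ‹Group.FG G›
  obtain ⟨h, d, hh, hcfg⟩ := hGH n _ P.val (Finite.equivFin Q ∘ π) P.closure_eq_top
  exact exists_surjective_of_configT_subset P.closure_eq_top hh hπ (Finite.equivFin Q).injective
    hcfg.ge

section FiniteIndex

variable {G Q : Type*} [Group G] [Group Q]

instance finite_monoidHom_of_fg [Group.FG G] [Finite Q] : Finite (G →* Q) := by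
  obtain ⟨S, hS⟩ := Group.fg_def.1 ‹_›
  refine Finite.of_injective (fun φ : G →* Q => fun s : S => φ s) fun φ ψ hφψ => ?_
  exact MonoidHom.eq_of_eqOn_dense hS fun x hx => congrFun hφψ ⟨x, hx⟩

theorem exists_monoidHom_perm_ker_eq (N : Subgroup G) [N.Normal] (hN : N.index ≠ 0) :
    ∃ φ : G →* Equiv.Perm (Fin N.index), φ.ker = N := by
  have : Finite (G ⧸ N) := Nat.finite_of_card_ne_zero (index_eq_card N ▸ hN)
  let e : G ⧸ N ≃ Fin N.index := Finite.equivFinOfCardEq (index_eq_card N).symm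
  refine ⟨(e.permCongrHom : _ →* _).comp (MulAction.toPermHom G (G ⧸ N)), ?_⟩
  rw [MonoidHom.ker_mulEquiv_comp, ← normalCore_eq_ker, normalCore_eq_self]

variable (G) in
def normalOfIndexLE (n : ℕ) : Set (Subgroup G) :=
  {N | N.Normal ∧ N.index ≠ 0 ∧ N.index ≤ n}

theorem finite_normalOfIndexLE [Group.FG G] (n : ℕ) : (normalOfIndexLE G n).Finite := by
  refine ((Set.finite_Iic n).biUnion fun d _ =>
    Set.finite_range fun φ : G →* Equiv.Perm (Fin d) => φ.ker).subset ?_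
  rintro N ⟨hN, hN0, hNn⟩
  obtain ⟨φ, hφ⟩ := exists_monoidHom_perm_ker_eq N hN0
  exact Set.mem_biUnion (Set.mem_Iic.2 hNn) ⟨φ, hφ⟩

variable (G) in
def infNormalOfIndexLE (n : ℕ) : Subgroup G := sInf (normalOfIndexLE G n)

instance infNormalOfIndexLE.normal (n : ℕ) : (infNormalOfIndexLE G n).Normal := by
  rw [infNormalOfIndexLE, sInf_eq_iInf']
  exact normal_iInf_normal fun N => N.2.1

instance infNormalOfIndexLE.finiteIndex [Group.FG G] (n : ℕ) :
    (infNormalOfIndexLE G n).FiniteIndex := by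
  have := (finite_normalOfIndexLE (G := G) n).to_subtype
  rw [infNormalOfIndexLE, sInf_eq_iInf']
  exact finiteIndex_iInf fun N => ⟨N.2.2.1⟩

theorem map_infNormalOfIndexLE_le {f : G →* Q} (hf : Function.Surjective f) (n : ℕ) :
    (infNormalOfIndexLE G n).map f ≤ infNormalOfIndexLE Q n := by
  refine le_sInf fun N hN => map_le_iff_le_comap.2 (sInf_le ?_)
  obtain ⟨hN, hN0, hNn⟩ := hN
  rw [← index_comap_of_surjective _ hf] at hN0 hNn
  exact ⟨hN.comap f, hN0, hNn⟩

theorem infNormalOfIndexLE_quotient_eq_bot (n : ℕ) :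
    infNormalOfIndexLE (G ⧸ infNormalOfIndexLE G n) n = ⊥ := by
  set K := infNormalOfIndexLE G n
  refine eq_bot_iff.2 fun x hx => ?_
  obtain ⟨y, rfl⟩ := mk'_surjective K x
  refine (eq_one_iff y).2 (mem_sInf.2 fun N hN => ?_)
  have hKN : (mk' K).ker ≤ N := by rw [ker_mk']; exact sInf_le hN
  have hmap : N.map (mk' K) ∈ normalOfIndexLE (G ⧸ K) n := by
    obtain ⟨hN, hN0, hNn⟩ := hN
    rw [← index_map_eq _ (mk'_surjective K) hKN] at hN0 hNn
    exact ⟨hN.map _ (mk'_surjective K), hN0, hNn⟩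
  rw [← comap_map_eq_self hKN]
  exact mem_sInf.1 hx _ hmap

end FiniteIndex

theorem ConfigTRealizedIn.exists_surjective_quotient {G H : Type*} [Group G] [Group H]
    [Group.FG G] (hGH : ConfigTRealizedIn G H) (n : ℕ) :
    ∃ f : H ⧸ infNormalOfIndexLE H n →* G ⧸ infNormalOfIndexLE G n, Function.Surjective f := by
  obtain ⟨f, hf⟩ := hGH.exists_surjective (mk'_surjective (infNormalOfIndexLE G n))
  have hker : infNormalOfIndexLE H n ≤ f.ker := by
    rw [← MonoidHom.comap_bot, ← map_le_iff_le_comap, ← infNormalOfIndexLE_quotient_eq_bot]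
    exact map_infNormalOfIndexLE_le hf n
  exact ⟨lift _ f hker, lift_surjective_of_surjective _ f hf hker⟩

theorem ConfigTEquiv.nonempty_quotient_mulEquiv {G H : Type*} [Group G] [Group H]
    [Group.FG G] [Group.FG H] (hGH : ConfigTEquiv G H) (n : ℕ) :
    Nonempty (G ⧸ infNormalOfIndexLE G n ≃* H ⧸ infNormalOfIndexLE H n) := by
  obtain ⟨f, hf⟩ := ConfigTRealizedIn.exists_surjective_quotient hGH.1 n
  obtain ⟨f', hf'⟩ := ConfigTRealizedIn.exists_surjective_quotient hGH.2 n
  have hcard := le_antisymm (Nat.card_le_card_of_surjective f hf)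
    (Nat.card_le_card_of_surjective f' hf')
  exact ⟨MulEquiv.ofBijective f' ((Nat.bijective_iff_surjective_and_card f').2 ⟨hf', hcard⟩)⟩

section Correspondence

variable {G H Q : Type*} [Group G] [Group H] [Group Q]

noncomputable def quotientComapEquiv (q : H →* Q) (hq : Function.Surjective q)
    (T : Subgroup Q) [T.Normal] : H ⧸ T.comap q ≃* Q ⧸ T :=
  (quotientMulEquivOfEq (by rw [← MonoidHom.comap_ker, ker_mk'])).trans
    (quotientKerEquivOfSurjective ((mk' T).comp q) ((mk'_surjective T).comp hq))

def correspondingSubgroup (p : G →* Q) (q : H →* Q) (N : Subgroup G) : Subgroup H :=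
  (N.map p).comap q

variable {p : G →* Q} {q : H →* Q} {N : Subgroup G}

theorem correspondingSubgroup_normal (hp : Function.Surjective p) (hN : N.Normal) :
    (correspondingSubgroup p q N).Normal :=
  (hN.map p hp).comap q

theorem index_correspondingSubgroup (hp : Function.Surjective p) (hq : Function.Surjective q)
    (hN : p.ker ≤ N) : (correspondingSubgroup p q N).index = N.index := by
  rw [correspondingSubgroup, index_comap_of_surjective _ hq, index_map_eq _ hp hN]

theorem correspondingSubgroup_correspondingSubgroup (hq : Function.Surjective q)
    (hN : p.ker ≤ N) : correspondingSubgroup q p (correspondingSubgroup p q N) = N := by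
  rw [correspondingSubgroup, correspondingSubgroup, map_comap_eq_self_of_surjective hq,
    comap_map_eq_self hN]

noncomputable def quotientCorrespondingSubgroupEquiv (hp : Function.Surjective p)
    (hq : Function.Surjective q) (hN : p.ker ≤ N) [hNn : N.Normal]
    [(correspondingSubgroup p q N).Normal] : G ⧸ N ≃* H ⧸ correspondingSubgroup p q N :=
  haveI := hNn.map p hp
  (quotientMulEquivOfEq (comap_map_eq_self hN).symm).trans
    ((quotientComapEquiv p hp _).trans (quotientComapEquiv q hq _).symm)

end Correspondence

abbrev FiniteIndexNormal (G : Type*) [Group G] : Type _ :=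
  {N : Subgroup G // N.Normal ∧ N.index ≠ 0}

instance FiniteIndexNormal.normal {G : Type*} [Group G] (N : FiniteIndexNormal G) : N.1.Normal :=
  N.2.1

theorem FiniteIndexNormal.exists_equiv_of_commonQuotients {G H : Type*} [Group G] [Group H]
    {Q : ℕ → Type*} [∀ d, Group (Q d)] (p : ∀ d, G →* Q d) (q : ∀ d, H →* Q d)
    (hp : ∀ d, Function.Surjective (p d)) (hq : ∀ d, Function.Surjective (q d))
    (hpN : ∀ N : FiniteIndexNormal G, (p N.1.index).ker ≤ N.1)
    (hqM : ∀ M : FiniteIndexNormal H, (q M.1.index).ker ≤ M.1) :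
    ∃ σ : FiniteIndexNormal G ≃ FiniteIndexNormal H,
      ∀ N, Nonempty (G ⧸ N.1 ≃* H ⧸ (σ N).1) := by
  have hidxG (N : FiniteIndexNormal G) :
      (correspondingSubgroup (p N.1.index) (q N.1.index) N.1).index = N.1.index :=
    index_correspondingSubgroup (hp _) (hq _) (hpN N)
  have hidxH (M : FiniteIndexNormal H) :
      (correspondingSubgroup (q M.1.index) (p M.1.index) M.1).index = M.1.index :=
    index_correspondingSubgroup (hq _) (hp _) (hqM M)
  -- The transport preserves the index, so the way back uses the same common quotient `Q d`.
  let σ : FiniteIndexNormal G ≃ FiniteIndexNormal H :=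
    { toFun N := ⟨correspondingSubgroup (p N.1.index) (q N.1.index) N.1,
        correspondingSubgroup_normal (hp _) N.2.1, (hidxG N).trans_ne N.2.2⟩
      invFun M := ⟨correspondingSubgroup (q M.1.index) (p M.1.index) M.1,
        correspondingSubgroup_normal (hq _) M.2.1, (hidxH M).trans_ne M.2.2⟩
      left_inv N := by
        apply Subtype.ext
        dsimp only
        rw [hidxG, correspondingSubgroup_correspondingSubgroup (hq _) (hpN N)]
      right_inv M := by
        apply Subtype.ext
        dsimp only
        rw [hidxH, correspondingSubgroup_correspondingSubgroup (hp _) (hqM M)] }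
  refine ⟨σ, fun N => ?_⟩
  have := correspondingSubgroup_normal (q := q N.1.index) (hp _) N.2.1
  exact ⟨quotientCorrespondingSubgroupEquiv (hp _) (hq _) (hpN N)⟩

theorem ConfigTEquiv.exists_equiv_finiteIndexNormal {G H : Type*} [Group G] [Group H]
    [Group.FG G] [Group.FG H] (hGH : ConfigTEquiv G H) :
    ∃ σ : FiniteIndexNormal G ≃ FiniteIndexNormal H,
      ∀ N, Nonempty (G ⧸ N.1 ≃* H ⧸ (σ N).1) := by
  have Φ d := (hGH.nonempty_quotient_mulEquiv d).some
  refine FiniteIndexNormal.exists_equiv_of_commonQuotients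
    (fun d => (Φ d : G ⧸ _ →* H ⧸ _).comp (mk' (infNormalOfIndexLE G d)))
    (fun d => mk' (infNormalOfIndexLE H d))
    (fun d => (Φ d).surjective.comp (mk'_surjective _)) (fun d => mk'_surjective _)
    (fun N => ?_) (fun M => ?_)
  · rw [MonoidHom.ker_mulEquiv_comp, ker_mk']
    exact sInf_le ⟨N.2.1, N.2.2, le_rfl⟩
  · rw [ker_mk']
    exact sInf_le ⟨M.2.1, M.2.2, le_rfl⟩

def MulEquiv.piCongrLeft' {ι κ : Type*} (X : ι → Type*) [∀ i, Mul (X i)] (e : ι ≃ κ) :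
    (∀ i, X i) ≃* ∀ k, X (e.symm k) :=
  { Equiv.piCongrLeft' X e with map_mul' _ _ := rfl }

theorem stmt11 (G H : Type*) [Group G] [Group H] [Group.FG G] [Group.FG H]
    (hGH : ConfigTEquiv G H) :
    Nonempty (FiniteIndexQuotProd G ≃* FiniteIndexQuotProd H) := by
  obtain ⟨σ, hσ⟩ := hGH.exists_equiv_finiteIndexNormal
  have hσ' (M : FiniteIndexNormal H) : Nonempty (G ⧸ (σ.symm M).1 ≃* H ⧸ M.1) := by
    have := hσ (σ.symm M)
    rwa [σ.apply_symm_apply] at this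
  exact ⟨(MulEquiv.piCongrLeft' _ σ).trans (MulEquiv.piCongrRight fun M => (hσ' M).some)⟩
end

section
/- Let G and H be finitely generated groups and suppose there exists a generating-surjection φ : G → H. Then Con_t(H) ⊆ Con_t(G): for every configuration pair (h, d) of H there exists a configuration pair (g, c) of G, with g of the same length as h and c a coloring into the same color set as d, such that Con_t(g, c) = Con_t(h, d). -/
/-- A group homomorphism `φ : G →* H` is a generating-surjection if every ordered
generating tuple of `H` lifts to an ordered generating tuple of `G` along `φ`. -/
def GeneratingSurjection {G H : Type*} [Group G] [Group H] (φ : G →* H) : Prop :=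
  ∀ (n : ℕ) (h : Fin n → H), Generates h →
    ∃ g : Fin n → G, Generates g ∧ ∀ i, φ (g i) = h i

theorem stmt13 (G H : Type*) [Group G] [Group H] [Group.FG G] [Group.FG H]
    (φ : G →* H) (hφ : GeneratingSurjection φ) :
    ∀ (n m : ℕ) (h : Fin n → H) (d : H → Fin m), Generates h →
      ∃ (g : Fin n → G) (c : G → Fin m), Generates g ∧ ConfigT g c = ConfigT h d := by
  intro n m h d hgen
  obtain ⟨g, hg, hgh⟩ := hφ n h hgen
  have hsurj : Function.Surjective φ := by
    have hrange : ∀ i, h i ∈ φ.range := fun i => ⟨g i, hgh i⟩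
    have : Subgroup.closure (Set.range h) ≤ φ.range := by
      apply Subgroup.closure_le _ |>.2
      rintro _ ⟨i, rfl⟩; exact hrange i
    rw [hgen] at this
    exact MonoidHom.range_eq_top.mp (top_le_iff.mp this)
  refine ⟨g, d ∘ φ, hg, ?_⟩
  ext p
  constructor
  · rintro ⟨x, h1, h2, h3⟩
    refine ⟨φ x, h1, fun i => ?_, fun i => ?_⟩
    · have := h2 i; simpa [hgh i] using this
    · have := h3 i; simpa [hgh i] using this
  · rintro ⟨y, h1, h2, h3⟩
    obtain ⟨x, rfl⟩ := hsurj y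
    refine ⟨x, h1, fun i => ?_, fun i => ?_⟩
    · simp only [Function.comp, map_mul, hgh i]; exact h2 i
    · simp only [Function.comp, map_mul, hgh i]; exact h3 i
end

section
/- Let G and H be finitely generated groups that are generating-bijective, i.e., there exist a generating-surjection φ : G → H and a generating-surjection ψ : H → G. Then G and H are two-sided configuration equivalent. -/
lemma genSurj_surjective {G H : Type*} [Group G] [Group H] [Group.FG G]
    (ψ : H →* G) (hψ : GeneratingSurjection ψ) : Function.Surjective ψ := by
  obtain ⟨S, hS⟩ := Group.FG.out (G := G)
  haveI : Fintype (S : Set G) := S.finite_toSet.fintype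
  let e := Fintype.equivFin (S : Set G)
  set g : Fin (Fintype.card (S : Set G)) → G := fun i => ((e.symm i : S) : G) with hg
  have hrange : Set.range g = (S : Set G) := by
    have : Set.range g = Set.range (fun s : (S : Set G) => (s : G)) := by
      ext x
      constructor
      · rintro ⟨i, rfl⟩; exact ⟨e.symm i, rfl⟩
      · rintro ⟨s, rfl⟩; exact ⟨e s, by simp [hg]⟩
    rw [this, Subtype.range_coe]
  have hgen : Generates g := by
    unfold Generates
    rw [hrange]
    simpa using hS
  obtain ⟨h, _, hh⟩ := hψ _ g hgen
  rw [← MonoidHom.range_eq_top]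
  rw [eq_top_iff, ← hgen]
  apply Subgroup.closure_le _ |>.2
  rintro x ⟨i, rfl⟩
  exact ⟨h i, hh i⟩

lemma configT_eq {G H : Type*} [Group G] [Group H] {n m : ℕ}
    (ψ : H →* G) (hs : Function.Surjective ψ) (h : Fin n → H) (c : G → Fin m) :
    ConfigT (fun i => ψ (h i)) c = ConfigT h (c ∘ ψ) := by
  ext p
  constructor
  · rintro ⟨x, hx, h1, h2⟩
    obtain ⟨y, rfl⟩ := hs x
    exact ⟨y, hx, fun i => by simpa using h1 i, fun i => by simpa using h2 i⟩
  · rintro ⟨y, hy, h1, h2⟩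
    exact ⟨ψ y, hy, fun i => by simpa using h1 i, fun i => by simpa using h2 i⟩

lemma half {G H : Type*} [Group G] [Group H] [Group.FG G]
    (ψ : H →* G) (hψ : GeneratingSurjection ψ) :
    ∀ (n m : ℕ) (g : Fin n → G) (c : G → Fin m), Generates g →
    ∃ (h : Fin n → H) (d : H → Fin m), Generates h ∧ ConfigT g c = ConfigT h d := by
  intro n m g c hg
  obtain ⟨h, hgen, hh⟩ := hψ n g hg
  refine ⟨h, c ∘ ψ, hgen, ?_⟩
  have : g = fun i => ψ (h i) := funext fun i => (hh i).symm
  rw [this, configT_eq ψ (genSurj_surjective ψ hψ) h c]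

theorem stmt14 (G H : Type*) [Group G] [Group H] [Group.FG G] [Group.FG H]
    (φ : G →* H) (ψ : H →* G)
    (hφ : GeneratingSurjection φ) (hψ : GeneratingSurjection ψ) :
    ConfigTEquiv G H :=
  ⟨half ψ hψ, half φ hφ⟩
end

section
/- Let R = ℤ[t, t^{-1}] be the ring of Laurent polynomials over ℤ, and let K be the set of 3×3 matrices over R of the form (A, B, C, D) := [[1, B, D], [0, A, C], [0, 0, 1]] with B, C, D ∈ R and A = t^k for some k ∈ ℤ. Then K is a subgroup of the group of invertible 3×3 matrices over R, and K is generated by the three elements k_1 = (t, 0, 0, 0), k_2 = (1, 1, 0, 0), and k_3 = (1, 0, 1, 0). -/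
/-!
`K` is closed under products and inverses because `(tᵏ, B, C, D)` has the explicit inverse
`(t⁻ᵏ, -Bt⁻ᵏ, -t⁻ᵏC, Bt⁻ᵏC - D)`. Conversely, let `H` contain `k₁, k₂, k₃`. Conjugating `k₂` and
`k₃` by powers of `k₁` puts the shears `(1, tᵐ, 0, 0)` and `(1, 0, tᵐ, 0)` into `H`; since
`B ↦ (1, B, 0, 0)` and `C ↦ (1, 0, C, 0)` turn addition into multiplication and the monomials `tᵐ`
additively generate `ℤ[t, t⁻¹]`, all these shears lie in `H`. The commutator of `(1, D, 0, 0)`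
and `(1, 0, 1, 0)` is `(1, 0, 0, D)`, and every element of `K` factors as
`(tᵏ, B, C, D) = (tᵏ, 0, 0, 0) (1, B, 0, 0) (1, 0, t⁻ᵏC, 0) (1, 0, 0, D - Bt⁻ᵏC)`.
-/

open LaurentPolynomial

/-- The ring `R = ℤ[t, t⁻¹]` of Laurent polynomials over `ℤ`. -/
abbrev LaurentZ : Type := LaurentPolynomial ℤ

/-- The upper triangular matrix `(A, B, C, D) = [[1, B, D], [0, A, C], [0, 0, 1]]`. -/
noncomputable def Mquad (A B C D : LaurentZ) : Matrix (Fin 3) (Fin 3) LaurentZ :=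
  !![1, B, D; 0, A, C; 0, 0, 1]

/-- The set of invertible `3 × 3` matrices over `ℤ[t, t⁻¹]` of the form `(A, B, C, D)` with
`A = tᵏ` for some `k : ℤ`. -/
def Kset : Set (Matrix (Fin 3) (Fin 3) LaurentZ)ˣ :=
  { u | ∃ (k : ℤ) (B C D : LaurentZ),
      (u : Matrix (Fin 3) (Fin 3) LaurentZ) = Mquad (T k) B C D }

theorem Subgroup.apply_mem_of_map_add_of_closure_eq_top {M G : Type*} [AddGroup M] [Group G]
    (H : Subgroup G) {f : M → G} (hf : ∀ a b, f (a + b) = f a * f b) {s : Set M}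
    (hs : AddSubgroup.closure s = ⊤) (h : ∀ a ∈ s, f a ∈ H) (a : M) : f a ∈ H := by
  have hf0 : f 0 = 1 := by simpa using hf 0 0
  have ha : a ∈ AddSubgroup.closure s := hs ▸ AddSubgroup.mem_top a
  induction ha using AddSubgroup.closure_induction with
  | mem a ha => exact h a ha
  | zero => exact hf0 ▸ H.one_mem
  | add a b _ _ ha hb => exact hf a b ▸ H.mul_mem ha hb
  | neg a _ ha =>
    have : f (-a) = (f a)⁻¹ := eq_inv_of_mul_eq_one_left (by rw [← hf, neg_add_cancel, hf0])
    exact this ▸ H.inv_mem ha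

theorem LaurentPolynomial.addSubgroupClosure_range_T :
    AddSubgroup.closure (Set.range (T : ℤ → ℤ[T;T⁻¹])) = ⊤ := by
  refine (AddSubgroup.eq_top_iff' _).2 fun p => ?_
  induction p using LaurentPolynomial.induction_on' with
  | add p q hp hq => exact add_mem hp hq
  | C_mul_T n a =>
    rw [← smul_eq_C_mul]
    exact zsmul_mem (AddSubgroup.subset_closure (Set.mem_range_self n)) a

lemma Mquad_mul (A B C D X Y Z W : LaurentZ) :
    Mquad A B C D * Mquad X Y Z W = Mquad (A * X) (B * X + Y) (C + A * Z) (D + B * Z + W) := by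
  ext i j
  fin_cases i <;> fin_cases j <;> simp [Mquad, Matrix.mul_apply, Fin.sum_univ_three] <;> ring

lemma Mquad_one_zero : Mquad 1 0 0 0 = 1 :=
  Matrix.one_fin_three.symm

noncomputable def mquadUnit (k : ℤ) (B C D : LaurentZ) : (Matrix (Fin 3) (Fin 3) LaurentZ)ˣ where
  val := Mquad (T k) B C D
  inv := Mquad (T (-k)) (-(B * T (-k))) (-(T (-k) * C)) (B * T (-k) * C - D)
  val_inv := by
    have hk : (T k * T (-k) : LaurentZ) = 1 := mul_invOf_self _
    rw [Mquad_mul, hk, ← Mquad_one_zero]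
    congr 1
    · ring
    · linear_combination (-C) * hk
    · ring
  inv_val := by
    have hk : (T (-k) * T k : LaurentZ) = 1 := invOf_mul_self _
    rw [Mquad_mul, hk, ← Mquad_one_zero]
    congr 1
    · linear_combination (-B) * hk
    · ring
    · ring

@[simp]
lemma mquadUnit_val (k : ℤ) (B C D : LaurentZ) :
    (mquadUnit k B C D : Matrix (Fin 3) (Fin 3) LaurentZ) = Mquad (T k) B C D := rfl

lemma mquadUnit_mul (k l : ℤ) (B C D Y Z W : LaurentZ) :
    mquadUnit k B C D * mquadUnit l Y Z W =
      mquadUnit (k + l) (B * T l + Y) (C + T k * Z) (D + B * Z + W) :=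
  Units.ext <| by
    rw [Units.val_mul, mquadUnit_val, mquadUnit_val, mquadUnit_val, Mquad_mul, T_add]

lemma mquadUnit_inv (k : ℤ) (B C D : LaurentZ) :
    (mquadUnit k B C D)⁻¹ =
      mquadUnit (-k) (-(B * T (-k))) (-(T (-k) * C)) (B * T (-k) * C - D) :=
  Units.ext rfl

lemma mquadUnit_zero : mquadUnit 0 0 0 0 = 1 :=
  Units.ext <| by rw [mquadUnit_val, T_zero, Mquad_one_zero, Units.val_one]

lemma mem_Kset_iff {u : (Matrix (Fin 3) (Fin 3) LaurentZ)ˣ} :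
    u ∈ Kset ↔ ∃ (k : ℤ) (B C D : LaurentZ), u = mquadUnit k B C D := by
  simp only [Kset, Set.mem_ofPred_eq, Units.ext_iff, mquadUnit_val]

noncomputable def Ksub : Subgroup (Matrix (Fin 3) (Fin 3) LaurentZ)ˣ where
  carrier := Kset
  one_mem' := mem_Kset_iff.2 ⟨0, 0, 0, 0, mquadUnit_zero.symm⟩
  mul_mem' := by
    simp only [mem_Kset_iff]
    rintro _ _ ⟨k, B, C, D, rfl⟩ ⟨l, Y, Z, W, rfl⟩
    exact ⟨_, _, _, _, mquadUnit_mul k l B C D Y Z W⟩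
  inv_mem' := by
    simp only [mem_Kset_iff]
    rintro _ ⟨k, B, C, D, rfl⟩
    exact ⟨_, _, _, _, mquadUnit_inv k B C D⟩

section Generation

variable {H : Subgroup (Matrix (Fin 3) (Fin 3) LaurentZ)ˣ}

lemma mquadUnit_diag_mem (h₁ : mquadUnit 1 0 0 0 ∈ H) (k : ℤ) : mquadUnit k 0 0 0 ∈ H := by
  refine H.apply_mem_of_map_add_of_closure_eq_top (f := fun k ↦ mquadUnit k 0 0 0)
    (fun k l ↦ ?_) (s := {1})
    (by rw [← AddSubgroup.zmultiples_eq_closure, Int.zmultiples_one]) (by simpa) k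
  simp [mquadUnit_mul]

lemma mquadUnit_shear₁₂_mem (h₁ : mquadUnit 1 0 0 0 ∈ H) (h₂ : mquadUnit 0 1 0 0 ∈ H)
    (B : LaurentZ) : mquadUnit 0 B 0 0 ∈ H := by
  refine H.apply_mem_of_map_add_of_closure_eq_top (f := fun B ↦ mquadUnit 0 B 0 0)
    (fun B Y ↦ ?_) addSubgroupClosure_range_T ?_ B
  · simp [mquadUnit_mul]
  · rintro _ ⟨m, rfl⟩
    have hconj : mquadUnit (-m) 0 0 0 * mquadUnit 0 1 0 0 * mquadUnit m 0 0 0 =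
        mquadUnit 0 (T m) 0 0 := by
      simp [mquadUnit_mul]
    exact hconj ▸
      H.mul_mem (H.mul_mem (mquadUnit_diag_mem h₁ _) h₂) (mquadUnit_diag_mem h₁ m)

lemma mquadUnit_shear₂₃_mem (h₁ : mquadUnit 1 0 0 0 ∈ H) (h₃ : mquadUnit 0 0 1 0 ∈ H)
    (C : LaurentZ) : mquadUnit 0 0 C 0 ∈ H := by
  refine H.apply_mem_of_map_add_of_closure_eq_top (f := fun C ↦ mquadUnit 0 0 C 0)
    (fun C Z ↦ ?_) addSubgroupClosure_range_T ?_ C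
  · simp [mquadUnit_mul]
  · rintro _ ⟨m, rfl⟩
    have hconj : mquadUnit m 0 0 0 * mquadUnit 0 0 1 0 * mquadUnit (-m) 0 0 0 =
        mquadUnit 0 0 (T m) 0 := by
      simp [mquadUnit_mul]
    exact hconj ▸
      H.mul_mem (H.mul_mem (mquadUnit_diag_mem h₁ m) h₃) (mquadUnit_diag_mem h₁ _)

lemma mquadUnit_shear₁₃_mem (h₁ : mquadUnit 1 0 0 0 ∈ H) (h₂ : mquadUnit 0 1 0 0 ∈ H)
    (h₃ : mquadUnit 0 0 1 0 ∈ H) (D : LaurentZ) : mquadUnit 0 0 0 D ∈ H := by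
  have hB := mquadUnit_shear₁₂_mem h₁ h₂ D
  have hC := mquadUnit_shear₂₃_mem h₁ h₃ 1
  have hcomm : mquadUnit 0 D 0 0 * mquadUnit 0 0 1 0 * (mquadUnit 0 D 0 0)⁻¹ *
      (mquadUnit 0 0 1 0)⁻¹ = mquadUnit 0 0 0 D := by
    simp [mquadUnit_mul, mquadUnit_inv]
  exact hcomm ▸ H.mul_mem (H.mul_mem (H.mul_mem hB hC) (H.inv_mem hB)) (H.inv_mem hC)

lemma mquadUnit_eq_mul (k : ℤ) (B C D : LaurentZ) :
    mquadUnit k B C D = mquadUnit k 0 0 0 * mquadUnit 0 B 0 0 * mquadUnit 0 0 (T (-k) * C) 0 *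
      mquadUnit 0 0 0 (D - B * (T (-k) * C)) := by
  simp [mquadUnit_mul]

lemma Ksub_le_of_mem (h₁ : mquadUnit 1 0 0 0 ∈ H) (h₂ : mquadUnit 0 1 0 0 ∈ H)
    (h₃ : mquadUnit 0 0 1 0 ∈ H) : Ksub ≤ H := by
  rintro _ hu
  obtain ⟨k, B, C, D, rfl⟩ := mem_Kset_iff.1 hu
  rw [mquadUnit_eq_mul]
  exact H.mul_mem (H.mul_mem (H.mul_mem (mquadUnit_diag_mem h₁ k)
    (mquadUnit_shear₁₂_mem h₁ h₂ B)) (mquadUnit_shear₂₃_mem h₁ h₃ _))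
    (mquadUnit_shear₁₃_mem h₁ h₂ h₃ _)

end Generation

theorem stmt16 : ∃ K : Subgroup (Matrix (Fin 3) (Fin 3) LaurentZ)ˣ,
    (K : Set (Matrix (Fin 3) (Fin 3) LaurentZ)ˣ) = Kset ∧
    K = Subgroup.closure
      { u : (Matrix (Fin 3) (Fin 3) LaurentZ)ˣ |
        (u : Matrix (Fin 3) (Fin 3) LaurentZ) = Mquad (T 1) 0 0 0 ∨
        (u : Matrix (Fin 3) (Fin 3) LaurentZ) = Mquad 1 1 0 0 ∨
        (u : Matrix (Fin 3) (Fin 3) LaurentZ) = Mquad 1 0 1 0 } := by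
  refine ⟨Ksub, rfl, le_antisymm (Ksub_le_of_mem ?_ ?_ ?_) ((Subgroup.closure_le _).2 ?_)⟩
  · exact Subgroup.subset_closure (Or.inl rfl)
  · exact Subgroup.subset_closure (Or.inr (Or.inl (by rw [mquadUnit_val, T_zero])))
  · exact Subgroup.subset_closure (Or.inr (Or.inr (by rw [mquadUnit_val, T_zero])))
  · rintro u (h | h | h)
    · exact ⟨1, 0, 0, 0, h⟩
    · exact ⟨0, 1, 0, 0, by rwa [T_zero]⟩
    · exact ⟨0, 0, 1, 0, by rwa [T_zero]⟩
end
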